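/- arXiv:2211.11145 — 9 statements merged into one kernel-verified Lean document; each statement's English description precedes it below -/
import Mathlib

section
/- Let β₀ < β₁ be real numbers and 0 < ε < (β₁ − β₀)/2. There exists a countably infinite set B = {b₀, b₁, b₂, ...} of real numbers such that: (1) B is linearly independent over ℚ; (2) for all n ≥ 1, β₀ < b₀ < b₂ₙ < β₀ + ε and β₁ − ε < b₂ₙ₊₁ < b₁ < β₁; (3) b₂ₙ → b₀ and b₂ₙ₊₁ → b₁ as n → ∞. -/
/-!
Multiplying the vectors of a `ℚ`-linearly independent family by nonzero rationals keeps it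
independent, and the nonzero rational multiples of a nonzero real are dense in `ℝ`. Since `ℝ` is
uncountable it is infinite-dimensional over `ℚ`, so there is an independent sequence `w`; rescale
`w 0` into `(β₀, β₀ + ε/2)` and `w 1` into `(β₁ - ε/2, β₁)`, and then each `w (2n)` into
`(b₀, b₀ + r n)` and each `w (2n+1)` into `(b₁ - r n, b₁)` for radii `r n → 0`.
-/

open Filter Set

theorem exists_linearIndependent_nat_of_not_finite {K V : Type*} [DivisionRing K]
    [AddCommGroup V] [Module K V] (h : ¬Module.Finite K V) :
    ∃ w : ℕ → V, LinearIndependent K w := by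
  let B := Module.Free.chooseBasis K V
  have : Infinite (Module.Free.ChooseBasisIndex K V) :=
    not_finite_iff_infinite.mp fun _ => h (Module.Finite.of_basis B)
  exact ⟨B ∘ Infinite.natEmbedding _,
    B.linearIndependent.comp _ (Infinite.natEmbedding _).injective⟩

theorem Real.not_moduleFinite_rat : ¬Module.Finite ℚ ℝ := fun _ =>
  not_countable (Finsupp.Countable.of_moduleFinite (R := ℚ) (M := ℝ))

theorem exists_units_rat_smul_mem_Ioo {w : ℝ} (hw : w ≠ 0) {a c : ℝ} (h : a < c) :
    ∃ q : ℚˣ, q • w ∈ Ioo a c := by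
  have hd : Dense (range (fun q : ℚ => (q : ℝ) * w) \ {0}) :=
    Dense.sdiff_singleton ((Homeomorph.mulRight₀ w hw).surjective.denseRange.comp
      Rat.denseRange_cast (Homeomorph.mulRight₀ w hw).continuous) 0
  obtain ⟨_, ⟨⟨q, rfl⟩, hne⟩, hmem⟩ := hd.exists_between h
  have hq : q ≠ 0 := by rintro rfl; simp at hne
  exact ⟨Units.mk0 q hq, by simpa [Units.smul_def, Rat.smul_def] using hmem⟩

theorem LinearIndependent.exists_rescaling_mem_Ioo {ι : Type*} {w : ι → ℝ}
    (hw : LinearIndependent ℚ w) (p : ι → Prop) {a c : ι → ℝ} (hac : ∀ i, p i → a i < c i) :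
    ∃ b : ι → ℝ, LinearIndependent ℚ b ∧ (∀ i, ¬p i → b i = w i) ∧
      ∀ i, p i → b i ∈ Ioo (a i) (c i) := by
  have hunit : ∀ i, ∃ q : ℚˣ, (p i → q • w i ∈ Ioo (a i) (c i)) ∧ (¬p i → q = 1) := by
    intro i
    by_cases hi : p i
    · obtain ⟨q, hq⟩ := exists_units_rat_smul_mem_Ioo (hw.ne_zero i) (hac i hi)
      exact ⟨q, fun _ => hq, absurd hi⟩
    · exact ⟨1, (absurd · hi), fun _ => rfl⟩
  choose q hq using hunit
  exact ⟨q • w, hw.units_smul q, fun i hi => by simp [(hq i).2 hi], fun i hi => (hq i).1 hi⟩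

theorem LinearIndependent.exists_rescaling_even_odd_mem_Ioo {v : ℕ → ℝ}
    (hv : LinearIndependent ℚ v) {r : ℕ → ℝ} (hr : ∀ n, 0 < r n) :
    ∃ b : ℕ → ℝ, LinearIndependent ℚ b ∧ b 0 = v 0 ∧ b 1 = v 1 ∧ ∀ n, 1 ≤ n →
      b (2 * n) ∈ Ioo (v 0) (v 0 + r n) ∧ b (2 * n + 1) ∈ Ioo (v 1 - r n) (v 1) := by
  obtain ⟨b, hb, hb_fix, hb_mem⟩ := hv.exists_rescaling_mem_Ioo (2 ≤ ·)
    (a := fun n => if Even n then v 0 else v 1 - r (n / 2))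
    (c := fun n => if Even n then v 0 + r (n / 2) else v 1)
    (fun n _ => by have := hr (n / 2); split_ifs <;> linarith)
  refine ⟨b, hb, hb_fix 0 (by omega), hb_fix 1 (by omega), fun n hn => ⟨?_, ?_⟩⟩
  · simpa using hb_mem (2 * n) (by omega)
  · simpa [show (2 * n + 1) / 2 = n by omega] using hb_mem (2 * n + 1) (by omega)

theorem tendsto_of_eventually_dist_le {α β : Type*} [PseudoMetricSpace α] {f : β → α}
    {l : Filter β} {a : α} {r : β → ℝ} (h : ∀ᶠ x in l, dist (f x) a ≤ r x)
    (hr : Tendsto r l (nhds 0)) : Tendsto f l (nhds a) :=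
  tendsto_iff_dist_tendsto_zero.2 (squeeze_zero' (.of_forall fun _ => dist_nonneg) h hr)

theorem vonNeumann_set_exists_general (β₀ β₁ ε : ℝ)
    (hε : 0 < ε) :
    ∃ b : ℕ → ℝ, Function.Injective b ∧
      LinearIndependent ℚ b ∧
      (∀ n : ℕ, 1 ≤ n →
        β₀ < b 0 ∧ b 0 < b (2 * n) ∧ b (2 * n) < β₀ + ε ∧
        β₁ - ε < b (2 * n + 1) ∧ b (2 * n + 1) < b 1 ∧ b 1 < β₁) ∧
      Tendsto (fun n : ℕ => b (2 * n)) atTop (nhds (b 0)) ∧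
      Tendsto (fun n : ℕ => b (2 * n + 1)) atTop (nhds (b 1)) := by
  obtain ⟨w, hw⟩ := exists_linearIndependent_nat_of_not_finite Real.not_moduleFinite_rat
  obtain ⟨v, hv, -, hv_mem⟩ := hw.exists_rescaling_mem_Ioo (· < 2)
    (a := fun n => if n = 0 then β₀ else β₁ - ε / 2)
    (c := fun n => if n = 0 then β₀ + ε / 2 else β₁) (fun n _ => by split_ifs <;> linarith)
  have hv₀ : v 0 ∈ Ioo β₀ (β₀ + ε / 2) := by simpa using hv_mem 0 (by omega)
  have hv₁ : v 1 ∈ Ioo (β₁ - ε / 2) β₁ := by simpa using hv_mem 1 (by omega)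
  set r : ℕ → ℝ := fun n => ε / 2 / (n + 1)
  have hr_pos (n : ℕ) : 0 < r n := by positivity
  have hr_le (n : ℕ) : r n ≤ ε / 2 := div_le_self (by positivity) (by simp)
  have hr_lim : Tendsto r atTop (nhds 0) := by
    simpa [r, div_eq_mul_one_div (ε / 2)] using
      tendsto_one_div_add_atTop_nhds_zero_nat.const_mul (ε / 2)
  obtain ⟨b, hb, hb₀, hb₁, hb_mem⟩ := hv.exists_rescaling_even_odd_mem_Ioo hr_pos
  refine ⟨b, hb.injective, hb, ?_⟩
  rw [hb₀, hb₁]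
  refine ⟨fun n hn => ?_, ?_, ?_⟩
  · obtain ⟨⟨he₁, he₂⟩, ho₁, ho₂⟩ := hb_mem n hn
    exact ⟨hv₀.1, he₁, by linarith [hv₀.2, hr_le n], by linarith [hv₁.1, hr_le n], ho₂, hv₁.2⟩
  all_goals
    refine tendsto_of_eventually_dist_le ((eventually_ge_atTop 1).mono fun n hn => ?_) hr_lim
    obtain ⟨⟨he₁, he₂⟩, ho₁, ho₂⟩ := hb_mem n hn
    rw [Real.dist_eq, abs_le]
    constructor <;> linarith

/-- von Neumann's construction: given β₀ < β₁ and 0 < ε < (β₁ − β₀)/2, there is a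
countably infinite ℚ-linearly independent set B = {b₀, b₁, b₂, ...} of reals with
β₀ < b₀ < b₂ₙ < β₀ + ε and β₁ − ε < b₂ₙ₊₁ < b₁ < β₁ for all n ≥ 1,
and b₂ₙ → b₀, b₂ₙ₊₁ → b₁. -/
theorem vonNeumann_set_exists (β₀ β₁ ε : ℝ) (hβ : β₀ < β₁)
    (hε : 0 < ε) (hε' : ε < (β₁ - β₀) / 2) :
    ∃ b : ℕ → ℝ, Function.Injective b ∧
      LinearIndependent ℚ b ∧
      (∀ n : ℕ, 1 ≤ n →
        β₀ < b 0 ∧ b 0 < b (2 * n) ∧ b (2 * n) < β₀ + ε ∧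
        β₁ - ε < b (2 * n + 1) ∧ b (2 * n + 1) < b 1 ∧ b 1 < β₁) ∧
      Tendsto (fun n : ℕ => b (2 * n)) atTop (nhds (b 0)) ∧
      Tendsto (fun n : ℕ => b (2 * n + 1)) atTop (nhds (b 1)) :=
  vonNeumann_set_exists_general β₀ β₁ ε hε
end

section
/- Let ε > 0 and let B ⊆ (−2ε, 2ε) be a set satisfying the conclusions of von Neumann's construction with β₀ = −2ε and β₁ = 2ε: B = {b₀, b₁, b₂, ...} is ℚ-linearly independent with b₀ = min B, b₁ = max B, and for every δ > 0 the set {b ∈ B : b₀ + δ < b < b₁ − δ} is finite. Let G be the subgroup of ℝ generated by B, and let J be a finite interval of length greater than 8ε. Then no finite union of pairwise disjoint translates of B contains J ∩ G. -/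
/-!
The set `B` accumulates only at its endpoints `b 0` and `b 1`, which belong to it, so `B` is
closed; it is also countable, hence so is any finite union `U` of its translates. Since `b 0 / b 1`
is irrational, `G` is dense in `ℝ`. The complement of `U` is open and, being co-countable, dense,
so it meets `G` inside the open interval `(c₀, c₁) ⊆ J`.
-/

open Set

theorem isClosed_of_finite_inter_Ioo {S : Set ℝ} {lo hi : ℝ} (hlo : lo ∈ S) (hhi : hi ∈ S)
    (hS : S ⊆ Icc lo hi) (hfin : ∀ δ > 0, (S ∩ Ioo (lo + δ) (hi - δ)).Finite) :
    IsClosed S := by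
  refine closure_subset_iff_isClosed.1 fun x hx => ?_
  obtain ⟨hxlo, hxhi⟩ := closure_minimal hS isClosed_Icc hx
  rcases hxlo.eq_or_lt with rfl | hxlo
  · exact hlo
  rcases hxhi.eq_or_lt with rfl | hxhi
  · exact hhi
  set δ := min (x - lo) (hi - x) / 2 with hδdef
  have hδ : 0 < δ := half_pos (lt_min (sub_pos.2 hxlo) (sub_pos.2 hxhi))
  have hxI : x ∈ Ioo (lo + δ) (hi - δ) := by
    constructor <;> linarith [hδdef, min_le_left (x - lo) (hi - x), min_le_right (x - lo) (hi - x)]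
  have hx' := isOpen_Ioo.inter_closure ⟨hxI, hx⟩
  rw [inter_comm, (hfin δ hδ).isClosed.closure_eq] at hx'
  exact hx'.1

theorem irrational_div_of_linearIndependent {ι : Type*} {b : ι → ℝ} (hb : LinearIndependent ℚ b)
    {i j : ι} (hij : i ≠ j) : Irrational (b i / b j) := by
  rintro ⟨q, hq⟩
  have hbi : b i = q • b j := by rw [Rat.smul_def, hq, div_mul_cancel₀ _ (hb.ne_zero j)]
  refine hb.notMem_span_image (s := {j}) (by simpa using hij) ?_
  rw [image_singleton, hbi]
  exact Submodule.smul_mem _ q (Submodule.mem_span_singleton_self _)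

theorem dense_addSubgroupClosure_range_of_linearIndependent {ι : Type*} [Nontrivial ι]
    {b : ι → ℝ} (hb : LinearIndependent ℚ b) :
    Dense (AddSubgroup.closure (range b) : Set ℝ) := by
  obtain ⟨i, j, hij⟩ := exists_pair_ne ι
  refine (dense_addSubgroupClosure_pair_iff.2 (irrational_div_of_linearIndependent hb hij)).mono ?_
  exact AddSubgroup.closure_mono (pair_subset ⟨i, rfl⟩ ⟨j, rfl⟩)

theorem not_inter_subset_of_isClosed_of_countable {E : Type*} [AddCommGroup E] [Module ℝ E]
    [Nontrivial E] [TopologicalSpace E] [ContinuousAdd E] [ContinuousSMul ℝ E]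
    {U D s : Set E} (hU : IsClosed U) (hUc : U.Countable) (hD : Dense D)
    (hs : IsOpen s) (hne : s.Nonempty) : ¬ s ∩ D ⊆ U := by
  intro hsub
  obtain ⟨x, hxs, hxU, hxD⟩ :=
    ((hUc.dense_compl ℝ).inter_of_isOpen_left hD hU.isOpen_compl).inter_open_nonempty s hs hne
  exact hxU (hsub ⟨hxs, hxD⟩)

theorem no_finite_union_of_translates_covers_general
    (ε : ℝ) (hε : 0 < ε)
    (b : ℕ → ℝ)
    (hli : LinearIndependent ℚ b)
    (hmin : ∀ n, b 0 ≤ b n) (hmax : ∀ n, b n ≤ b 1)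
    (hacc : ∀ δ : ℝ, 0 < δ → {n : ℕ | b 0 + δ < b n ∧ b n < b 1 - δ}.Finite)
    (c₀ c₁ : ℝ) (hlen : 8 * ε < c₁ - c₀)
    (J : Set ℝ) (hJ₁ : Ioo c₀ c₁ ⊆ J)
    (k : ℕ) (a : Fin k → ℝ) :
    ¬ (J ∩ (AddSubgroup.closure (Set.range b) : Set ℝ) ⊆
        ⋃ i : Fin k, (a i + ·) '' Set.range b) := by
  intro hcover
  have hB : IsClosed (range b) :=
    isClosed_of_finite_inter_Ioo ⟨0, rfl⟩ ⟨1, rfl⟩ (range_subset_iff.2 fun n => ⟨hmin n, hmax n⟩)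
      fun δ hδ => by rw [← image_preimage_eq_range_inter]; exact (hacc δ hδ).image b
  have hU : IsClosed (⋃ i : Fin k, (a i + ·) '' range b) :=
    isClosed_iUnion_of_finite fun i => (Homeomorph.addLeft (a i)).isClosedMap _ hB
  have hUc : (⋃ i : Fin k, (a i + ·) '' range b).Countable :=
    countable_iUnion fun i => (countable_range b).image _
  exact not_inter_subset_of_isClosed_of_countable hU hUc
    (dense_addSubgroupClosure_range_of_linearIndependent hli) isOpen_Ioo
    (nonempty_Ioo.2 (by linarith)) fun x hx => hcover ⟨hJ₁ hx.1, hx.2⟩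

/-- No finite union of pairwise disjoint translates of the von Neumann set B
contains J ∩ G, where G is the subgroup generated by B and J is an interval
of length greater than 8ε. -/
theorem no_finite_union_of_translates_covers
    (ε : ℝ) (hε : 0 < ε)
    (b : ℕ → ℝ) (hinj : Function.Injective b)
    (hrange : Set.range b ⊆ Ioo (-2 * ε) (2 * ε))
    (hli : LinearIndependent ℚ b)
    (hmin : ∀ n, b 0 ≤ b n) (hmax : ∀ n, b n ≤ b 1)
    (hacc : ∀ δ : ℝ, 0 < δ → {n : ℕ | b 0 + δ < b n ∧ b n < b 1 - δ}.Finite)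
    (c₀ c₁ : ℝ) (hlen : 8 * ε < c₁ - c₀)
    (J : Set ℝ) (hJ₁ : Ioo c₀ c₁ ⊆ J) (hJ₂ : J ⊆ Icc c₀ c₁)
    (k : ℕ) (a : Fin k → ℝ)
    (hdisj : ∀ i j : Fin k, i ≠ j →
      Disjoint ((a i + ·) '' Set.range b) ((a j + ·) '' Set.range b)) :
    ¬ (J ∩ (AddSubgroup.closure (Set.range b) : Set ℝ) ⊆
        ⋃ i : Fin k, (a i + ·) '' Set.range b) :=
  no_finite_union_of_translates_covers_general ε hε b hli hmin hmax hacc c₀ c₁ hlen J hJ₁ k a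
end

section
/- Let c₀ < c₁ and 0 < ε < (c₁ − c₀)/8. Let B ⊆ (−2ε, 2ε) be the von Neumann set with accumulation points b₀ = min B ∈ (−2ε, −ε) and b₁ = max B ∈ (ε, 2ε), ℚ-linearly independent, and let G be the subgroup generated by B. Let J' = (c₀, c₁), let x ∈ J' ∩ G, and let a₁, ..., a_k ∈ ℝ with x ∉ ⋃ᵢ (aᵢ + B). Then there exists a ∈ ℝ such that x ∈ a + B ⊆ J' ∩ G and (a + B) ∩ ⋃ᵢ (aᵢ + B) = ∅. -/
/-!
Take `a = x - b m`, so that `x ∈ a + B ⊆ G`. Since `B` has diameter below `4ε`, the translate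
lies in `J'` once `b m` is close to `b₀` (if `x` is in the left half of `J'`) or to `b₁` (right
half), which holds for infinitely many `m`. The translate meets `aᵢ + B` only if
`x - aᵢ + b n = b m + b p` for some `n, p`; two such equations with different `m₁, m₂` make the
multisets `{n₂, m₁, p₁}` and `{n₁, m₂, p₂}` have the same sum, hence (linear independence) be
equal, which forces `m₂ = p₁` because `x ∉ aᵢ + B` rules out `m₂ = n₂`. So only finitely many
`m` are excluded.
-/

open Set Filter

theorem LinearIndependent.eq_of_sum_map_eq {ι M : Type*} [AddCommMonoid M] {b : ι → M}
    (hb : LinearIndependent ℕ b) {s t : Multiset ι} (h : (s.map b).sum = (t.map b).sum) :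
    s = t := by
  classical
  have key (s : Multiset ι) :
      Finsupp.linearCombination ℕ b (Multiset.toFinsupp s) = (s.map b).sum := by
    induction s using Multiset.induction_on <;> simp [*, ← Multiset.singleton_add]
  exact Multiset.toFinsupp.injective (hb (by rw [key, key, h]))

theorem LinearIndependent.finite_setOf_add_eq_add {ι M : Type*} [AddCancelCommMonoid M]
    {b : ι → M} (hb : LinearIndependent ℕ b) {d : M} (hd : d ∉ range b) :
    {m | ∃ n p, d + b n = b m + b p}.Finite := by
  obtain h | ⟨m₁, n₁, p₁, h₁⟩ := eq_empty_or_nonempty {m | ∃ n p, d + b n = b m + b p}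
  · exact h ▸ finite_empty
  refine ((finite_singleton p₁).insert m₁).subset ?_
  rintro m₂ ⟨n₂, p₂, h₂⟩
  have hsum : n₂ ::ₘ m₁ ::ₘ {p₁} = n₁ ::ₘ m₂ ::ₘ {p₂} := by
    refine hb.eq_of_sum_map_eq (add_left_cancel (a := d) ?_)
    simp only [Multiset.map_cons, Multiset.map_singleton, Multiset.sum_cons,
      Multiset.sum_singleton]
    calc d + (b n₂ + (b m₁ + b p₁)) = (d + b n₂) + (b m₁ + b p₁) := by abel
      _ = (d + b n₁) + (b m₂ + b p₂) := by rw [h₁, h₂, add_comm]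
      _ = d + (b n₁ + (b m₂ + b p₂)) := by abel
  have hm₂ : m₂ ∈ n₂ ::ₘ m₁ ::ₘ {p₁} := hsum ▸ by simp
  simp only [Multiset.mem_cons, Multiset.mem_singleton] at hm₂
  rcases hm₂ with rfl | rfl | rfl
  · exact absurd ⟨p₂, (add_left_cancel ((add_comm _ _).trans h₂)).symm⟩ hd
  · exact mem_insert _ _
  · exact mem_insert_of_mem _ rfl

theorem image_sub_add_range_subset_closure {ι G : Type*} [AddGroup G] {b : ι → G} {x : G}
    (hx : x ∈ AddSubgroup.closure (range b)) (m : ι) :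
    (x - b m + ·) '' range b ⊆ AddSubgroup.closure (range b) := by
  rintro _ ⟨_, ⟨n, rfl⟩, rfl⟩
  exact add_mem (sub_mem hx (AddSubgroup.subset_closure ⟨m, rfl⟩))
    (AddSubgroup.subset_closure ⟨n, rfl⟩)

theorem image_sub_add_range_inter_iUnion_eq_empty {ι κ G : Type*} [AddCommGroup G]
    {b : ι → G} {a : κ → G} {x : G} {m : ι}
    (hm : m ∉ ⋃ i, {m | ∃ n p, x - a i + b n = b m + b p}) :
    (x - b m + ·) '' range b ∩ ⋃ i, (a i + ·) '' range b = ∅ := by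
  refine eq_empty_iff_forall_notMem.2 ?_
  rintro _ ⟨⟨_, ⟨n, rfl⟩, rfl⟩, hy⟩
  obtain ⟨i, _, ⟨p, rfl⟩, h⟩ := mem_iUnion.1 hy
  replace h : a i + b p = x - b m + b n := h
  refine hm (mem_iUnion.2 ⟨i, n, p, ?_⟩)
  rw [← sub_eq_zero] at h ⊢
  rw [← neg_eq_zero, ← h]
  abel

theorem mem_Icc_of_even_of_odd {b : ℕ → ℝ} {ε : ℝ} (hε : 0 < ε) (hb₀ : b 0 < -ε)
    (hb₁ : ε < b 1) (heven : ∀ n : ℕ, 1 ≤ n → b 0 < b (2 * n) ∧ b (2 * n) < -ε)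
    (hodd : ∀ n : ℕ, 1 ≤ n → ε < b (2 * n + 1) ∧ b (2 * n + 1) < b 1) (n : ℕ) :
    b n ∈ Icc (b 0) (b 1) := by
  obtain ⟨q, rfl | rfl⟩ := Nat.even_or_odd' n
  · rcases Nat.eq_zero_or_pos q with rfl | hq
    · exact ⟨le_rfl, by linarith⟩
    · have := heven q hq
      constructor <;> linarith
  · rcases Nat.eq_zero_or_pos q with rfl | hq
    · exact ⟨by linarith, le_rfl⟩
    · have := hodd q hq
      constructor <;> linarith

theorem core_lemma_general
    (c₀ c₁ ε : ℝ) (hε : 0 < ε) (hε' : ε < (c₁ - c₀) / 8)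
    (b : ℕ → ℝ)
    (hli : LinearIndependent ℚ b)
    (hb₀ : b 0 ∈ Ioo (-2 * ε) (-ε)) (hb₁ : b 1 ∈ Ioo ε (2 * ε))
    (heven : ∀ n : ℕ, 1 ≤ n → b 0 < b (2 * n) ∧ b (2 * n) < -ε)
    (hodd : ∀ n : ℕ, 1 ≤ n → ε < b (2 * n + 1) ∧ b (2 * n + 1) < b 1)
    (htend₀ : Tendsto (fun n : ℕ => b (2 * n)) atTop (nhds (b 0)))
    (htend₁ : Tendsto (fun n : ℕ => b (2 * n + 1)) atTop (nhds (b 1)))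
    (x : ℝ) (hx : x ∈ Ioo c₀ c₁)
    (hxG : x ∈ (AddSubgroup.closure (Set.range b) : Set ℝ))
    (k : ℕ) (a : Fin k → ℝ)
    (hxa : x ∉ ⋃ i : Fin k, (a i + ·) '' Set.range b) :
    ∃ a' : ℝ, x ∈ (a' + ·) '' Set.range b ∧
      (a' + ·) '' Set.range b ⊆ Ioo c₀ c₁ ∩ (AddSubgroup.closure (Set.range b) : Set ℝ) ∧
      ((a' + ·) '' Set.range b) ∩ (⋃ i : Fin k, (a i + ·) '' Set.range b) = ∅ := by
  have hB := mem_Icc_of_even_of_odd hε hb₀.2 hb₁.1 heven hodd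
  set bad := ⋃ i, {m | ∃ n p, x - a i + b n = b m + b p}
  have hbad : bad.Finite := finite_iUnion fun i ↦
    (hli.restrict_scalars' ℕ).finite_setOf_add_eq_add fun ⟨p, hp⟩ ↦
      hxa (mem_iUnion.2 ⟨i, b p, mem_range_self p, by simp [hp]⟩)
  have hgood (f : ℕ → ℕ) (hf : f.Injective) : ∀ᶠ N in atTop, f N ∉ bad :=
    Nat.cofinite_eq_atTop ▸ hf.tendsto_cofinite.eventually hbad.eventually_cofinite_notMem
  obtain ⟨m, hm, hmJ⟩ : ∃ m ∉ bad, ∀ n, x - b m + b n ∈ Ioo c₀ c₁ := by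
    rcases le_or_gt x ((c₀ + c₁) / 2) with hxl | hxr
    · have hnear : ∀ᶠ N in atTop, b (2 * N) < b 0 + (x - c₀) :=
        htend₀.eventually_lt_const (by linarith [hx.1])
      obtain ⟨N, hN, hNbad⟩ :=
        (hnear.and (hgood (2 * ·) (mul_right_injective₀ two_ne_zero))).exists
      exact ⟨2 * N, hNbad, fun n ↦
        ⟨by linarith [(hB n).1], by linarith [(hB n).2, (hB (2 * N)).1, hb₀.1, hb₁.2]⟩⟩
    · have hnear : ∀ᶠ N in atTop, b 1 - (c₁ - x) < b (2 * N + 1) :=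
        htend₁.eventually_const_lt (by linarith [hx.2])
      obtain ⟨N, hN, hNbad⟩ :=
        (hnear.and (hgood (2 * · + 1) fun _ _ h ↦ by simpa using h)).exists
      exact ⟨2 * N + 1, hNbad, fun n ↦
        ⟨by linarith [(hB n).1, (hB (2 * N + 1)).2, hb₀.1, hb₁.2], by linarith [(hB n).2]⟩⟩
  refine ⟨x - b m, ⟨b m, mem_range_self m, sub_add_cancel x (b m)⟩, ?_,
    image_sub_add_range_inter_iUnion_eq_empty hm⟩
  rintro _ ⟨_, ⟨n, rfl⟩, rfl⟩
  exact ⟨hmJ n, image_sub_add_range_subset_closure hxG m ⟨b n, mem_range_self n, rfl⟩⟩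

/-- The core lemma: given x ∈ (c₀, c₁) ∩ G not covered by the pairwise translates
a₁ + B, ..., a_k + B, there is a translate a + B containing x, contained in
(c₀, c₁) ∩ G, and disjoint from all the aᵢ + B. -/
theorem core_lemma
    (c₀ c₁ ε : ℝ) (hε : 0 < ε) (hε' : ε < (c₁ - c₀) / 8)
    (b : ℕ → ℝ) (hinj : Function.Injective b)
    (hli : LinearIndependent ℚ b)
    (hb₀ : b 0 ∈ Ioo (-2 * ε) (-ε)) (hb₁ : b 1 ∈ Ioo ε (2 * ε))
    (heven : ∀ n : ℕ, 1 ≤ n → b 0 < b (2 * n) ∧ b (2 * n) < -ε)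
    (hodd : ∀ n : ℕ, 1 ≤ n → ε < b (2 * n + 1) ∧ b (2 * n + 1) < b 1)
    (htend₀ : Tendsto (fun n : ℕ => b (2 * n)) atTop (nhds (b 0)))
    (htend₁ : Tendsto (fun n : ℕ => b (2 * n + 1)) atTop (nhds (b 1)))
    (x : ℝ) (hx : x ∈ Ioo c₀ c₁)
    (hxG : x ∈ (AddSubgroup.closure (Set.range b) : Set ℝ))
    (k : ℕ) (a : Fin k → ℝ)
    (hxa : x ∉ ⋃ i : Fin k, (a i + ·) '' Set.range b) :
    ∃ a' : ℝ, x ∈ (a' + ·) '' Set.range b ∧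
      (a' + ·) '' Set.range b ⊆ Ioo c₀ c₁ ∩ (AddSubgroup.closure (Set.range b) : Set ℝ) ∧
      ((a' + ·) '' Set.range b) ∩ (⋃ i : Fin k, (a i + ·) '' Set.range b) = ∅ :=
  core_lemma_general c₀ c₁ ε hε hε' b hli hb₀ hb₁ heven hodd htend₀ htend₁ x hx hxG k a hxa
end

section
/- With the setup of the core lemma (B ⊆ (−2ε, 2ε) ℚ-independent with min b₀ and max b₁, G the group generated by B, x ∈ G), for each fixed a_i ∈ ℝ with x ∉ a_i + B, there are at most two real numbers v such that x ∈ v + B and (v + B) ∩ (a_i + B) ≠ ∅. -/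
/-!
If `x = v + c` and `v + d = a + e` with `c, d, e ∈ B`, then `x - a = c - d + e`, and `d ≠ c`
because `x ∉ a + B`. For a second translate `w ≠ v` of this kind, `x - a = c' - d' + e'` with
`c' ≠ c`; comparing the two expressions in the independent family `B`, the coefficient of `c'`
forces `e = c'`, i.e. `w = x - e`. So all translates other than `v` coincide.
-/

theorem LinearIndependent.eq_of_sub_add_eq_sub_add {ι R M : Type*} [Ring R] [CharZero R]
    [AddCommGroup M] [Module R M] {f : ι → M} (hf : LinearIndependent R f) {s t u p q r : ι}
    (h : f s - f t + f u = f p - f q + f r) (hts : t ≠ s) (hps : p ≠ s) : r = s := by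
  classical
  have hsum : Finsupp.linearCombination R f (.single s 1 + .single u 1 + .single q 1) =
      Finsupp.linearCombination R f (.single t 1 + .single p 1 + .single r 1) := by
    simp only [map_add, Finsupp.linearCombination_single, one_smul]
    rw [← sub_eq_zero] at h ⊢
    rw [← h]; abel
  have hs := DFunLike.congr_fun (hf.finsuppLinearCombination_injective hsum) s
  -- the coefficient of `s` is at least `1` on the left and `[r = s]` on the right
  by_contra hrs
  simp only [Finsupp.add_apply, Finsupp.single_apply, if_pos, if_neg hts, if_neg hps,
    if_neg hrs] at hs
  split_ifs at hs <;> norm_num at hs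

section Translates

variable {G : Type*} [AddCommGroup G] {B : Set G} {x a v w : G}

theorem exists_sub_add_of_translate_meets
    (hx : x ∈ (v + ·) '' B) (hmeet : ((v + ·) '' B ∩ (a + ·) '' B).Nonempty)
    (hxa : x ∉ (a + ·) '' B) :
    ∃ c ∈ B, ∃ d ∈ B, ∃ e ∈ B, v + c = x ∧ x - a = c - d + e ∧ d ≠ c := by
  obtain ⟨c, hc, rfl⟩ := hx
  obtain ⟨y, ⟨d, hd, rfl⟩, e, he, hde⟩ := hmeet
  refine ⟨c, hc, d, hd, e, he, rfl, ?_, ?_⟩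
  · simp only at hde ⊢
    rw [eq_sub_of_add_eq hde]
    abel
  · rintro rfl
    exact hxa ⟨e, he, hde⟩

theorem add_eq_of_translate_meets {R : Type*} [Ring R] [CharZero R] [Module R G]
    (hB : LinearIndependent R ((↑) : B → G)) (hxa : x ∉ (a + ·) '' B)
    {c d e : G} (hc : c ∈ B) (hd : d ∈ B) (he : e ∈ B) (hvc : v + c = x)
    (hcde : x - a = c - d + e)
    (hw : x ∈ (w + ·) '' B) (hmeet : ((w + ·) '' B ∩ (a + ·) '' B).Nonempty) (hvw : v ≠ w) :
    w + e = x := by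
  obtain ⟨c', hc', d', hd', e', he', hwc', hcde', hd'c'⟩ :=
    exists_sub_add_of_translate_meets hw hmeet hxa
  have hcc' : (⟨c, hc⟩ : B) ≠ ⟨c', hc'⟩ := by
    intro h
    apply hvw
    obtain rfl : c = c' := congrArg Subtype.val h
    exact add_right_cancel (hvc.trans hwc'.symm)
  have := hB.eq_of_sub_add_eq_sub_add (s := ⟨c', hc'⟩) (t := ⟨d', hd'⟩) (u := ⟨e', he'⟩)
    (p := ⟨c, hc⟩) (q := ⟨d, hd⟩) (r := ⟨e, he⟩) (hcde'.symm.trans hcde)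
    (fun h => hd'c' (congrArg Subtype.val h)) hcc'
  rw [show e = c' from congrArg Subtype.val this, hwc']

end Translates

theorem at_most_two_translates_general
    (B : Set ℝ)
    (hli : LinearIndependent ℚ ((↑) : B → ℝ))
    (x : ℝ)
    (aᵢ : ℝ) (hxa : x ∉ (aᵢ + ·) '' B) :
    ∀ v₁ v₂ v₃ : ℝ,
      (x ∈ (v₁ + ·) '' B ∧ ((v₁ + ·) '' B ∩ (aᵢ + ·) '' B).Nonempty) →
      (x ∈ (v₂ + ·) '' B ∧ ((v₂ + ·) '' B ∩ (aᵢ + ·) '' B).Nonempty) →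
      (x ∈ (v₃ + ·) '' B ∧ ((v₃ + ·) '' B ∩ (aᵢ + ·) '' B).Nonempty) →
      v₁ = v₂ ∨ v₁ = v₃ ∨ v₂ = v₃ := by
  rintro v₁ v₂ v₃ ⟨hx₁, hmeet₁⟩ ⟨hx₂, hmeet₂⟩ ⟨hx₃, hmeet₃⟩
  obtain ⟨c, hc, d, hd, e, he, hvc, hcde, -⟩ := exists_sub_add_of_translate_meets hx₁ hmeet₁ hxa
  by_contra! hne
  have h₂ := add_eq_of_translate_meets hli hxa hc hd he hvc hcde hx₂ hmeet₂ hne.1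
  have h₃ := add_eq_of_translate_meets hli hxa hc hd he hvc hcde hx₃ hmeet₃ hne.2.1
  exact hne.2.2 (add_right_cancel (h₂.trans h₃.symm))

/-- For a fixed aᵢ with x ∉ aᵢ + B, there are at most two reals v such that
x ∈ v + B and (v + B) ∩ (aᵢ + B) ≠ ∅. -/
theorem at_most_two_translates
    (B : Set ℝ) (hcount : B.Countable) (hinf : B.Infinite)
    (hli : LinearIndependent ℚ ((↑) : B → ℝ))
    (b₀ b₁ : ℝ) (hb₀ : b₀ ∈ B) (hb₁ : b₁ ∈ B)
    (hmin : ∀ b ∈ B, b₀ ≤ b) (hmax : ∀ b ∈ B, b ≤ b₁)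
    (x : ℝ) (hxG : x ∈ (AddSubgroup.closure B : Set ℝ))
    (aᵢ : ℝ) (hxa : x ∉ (aᵢ + ·) '' B) :
    ∀ v₁ v₂ v₃ : ℝ,
      (x ∈ (v₁ + ·) '' B ∧ ((v₁ + ·) '' B ∩ (aᵢ + ·) '' B).Nonempty) →
      (x ∈ (v₂ + ·) '' B ∧ ((v₂ + ·) '' B ∩ (aᵢ + ·) '' B).Nonempty) →
      (x ∈ (v₃ + ·) '' B ∧ ((v₃ + ·) '' B ∩ (aᵢ + ·) '' B).Nonempty) →
      v₁ = v₂ ∨ v₁ = v₃ ∨ v₂ = v₃ :=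
  at_most_two_translates_general B hli x aᵢ hxa
end

section
/- With the same setup, if both endpoints c₀ and c₁ belong to C = J ∩ G, then the translates (c₀ − b₀) + B and (c₁ − b₁) + B are disjoint subsets of C. -/
open Set

/-! Every point of `B` lies in `[b₀, b₁]`, so `(c₀ − b₀) + B ⊆ [c₀, c₀ + w]` and
`(c₁ − b₁) + B ⊆ [c₁ − w, c₁]` with `w = b₁ − b₀ < 4ε`. As `2w < 8ε < c₁ − c₀`, these intervals
are disjoint and lie in `[c₀, c₁) ⊆ J` and `(c₀, c₁] ⊆ J` respectively. -/

section Order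

variable {α : Type*} [PartialOrder α] {a b : α} {J : Set α}

lemma Ico_subset_of_Ioo_subset_of_left_mem (hab : a < b) (hJ : Ioo a b ⊆ J) (ha : a ∈ J) :
    Ico a b ⊆ J := by
  rw [← Ioo_insert_left hab]
  exact insert_subset ha hJ

lemma Ioc_subset_of_Ioo_subset_of_right_mem (hab : a < b) (hJ : Ioo a b ⊆ J) (hb : b ∈ J) :
    Ioc a b ⊆ J := by
  rw [← Ioo_insert_right hab]
  exact insert_subset hb hJ

end Order

lemma image_const_add_subset_Icc {α : Type*} [AddCommGroup α] [PartialOrder α]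
    [IsOrderedAddMonoid α] {B : Set α} {b₀ b₁ : α} (hB : B ⊆ Icc b₀ b₁) (c : α) :
    (c + ·) '' B ⊆ Icc (c + b₀) (c + b₁) :=
  (image_mono hB).trans (image_const_add_Icc c b₀ b₁).subset

lemma AddSubgroup.image_sub_add_subset {G : Type*} [AddGroup G] {H : AddSubgroup G}
    {B : Set G} (hB : B ⊆ H) {c a : G} (hc : c ∈ H) (ha : a ∈ H) :
    ((c - a) + ·) '' B ⊆ H := by
  rintro _ ⟨b, hb, rfl⟩
  exact add_mem (sub_mem hc ha) (hB hb)

theorem endpoint_translates_disjoint_general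
    (ε c₀ c₁ : ℝ) (hlen : 8 * ε < c₁ - c₀)
    (B : Set ℝ)
    (b₀ b₁ : ℝ) (hb₀B : b₀ ∈ B) (hb₁B : b₁ ∈ B)
    (hmin : ∀ b ∈ B, b₀ ≤ b) (hmax : ∀ b ∈ B, b ≤ b₁)
    (hgap : 2 * ε < b₁ - b₀ ∧ b₁ - b₀ < 4 * ε)
    (J : Set ℝ) (hJ₁ : Ioo c₀ c₁ ⊆ J)
    (hc₀ : c₀ ∈ J ∩ (AddSubgroup.closure B : Set ℝ))
    (hc₁ : c₁ ∈ J ∩ (AddSubgroup.closure B : Set ℝ)) :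
    Disjoint (((c₀ - b₀) + ·) '' B) (((c₁ - b₁) + ·) '' B) ∧
    ((c₀ - b₀) + ·) '' B ⊆ J ∩ (AddSubgroup.closure B : Set ℝ) ∧
    ((c₁ - b₁) + ·) '' B ⊆ J ∩ (AddSubgroup.closure B : Set ℝ) := by
  have hB : B ⊆ Icc b₀ b₁ := fun b hb => ⟨hmin b hb, hmax b hb⟩
  have hwidth : 2 * (b₁ - b₀) < c₁ - c₀ := by linarith [hgap.2]
  have hleft : ((c₀ - b₀) + ·) '' B ⊆ Icc c₀ (c₀ - b₀ + b₁) := by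
    simpa using image_const_add_subset_Icc hB (c₀ - b₀)
  have hright : ((c₁ - b₁) + ·) '' B ⊆ Icc (c₁ - b₁ + b₀) c₁ := by
    simpa using image_const_add_subset_Icc hB (c₁ - b₁)
  have hBG : B ⊆ AddSubgroup.closure B := AddSubgroup.subset_closure
  refine ⟨?_, subset_inter ?_ ?_, subset_inter ?_ ?_⟩
  · refine (Iic_disjoint_Ioi le_rfl).mono (hleft.trans Icc_subset_Iic_self)
      (hright.trans ((Icc_subset_Ioi_iff (by linarith)).2 (by linarith)))
  · exact hleft.trans <| (Icc_subset_Ico_right (by linarith)).trans <|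
      Ico_subset_of_Ioo_subset_of_left_mem (by linarith) hJ₁ hc₀.1
  · exact AddSubgroup.image_sub_add_subset hBG hc₀.2 (hBG hb₀B)
  · exact hright.trans <| (Icc_subset_Ioc_left (by linarith)).trans <|
      Ioc_subset_of_Ioo_subset_of_right_mem (by linarith) hJ₁ hc₁.1
  · exact AddSubgroup.image_sub_add_subset hBG hc₁.2 (hBG hb₁B)

/-- If both endpoints c₀, c₁ belong to C = J ∩ G, then the translates
(c₀ − b₀) + B and (c₁ − b₁) + B are disjoint subsets of C. -/
theorem endpoint_translates_disjoint
    (ε c₀ c₁ : ℝ) (hε : 0 < ε) (hlen : 8 * ε < c₁ - c₀)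
    (B : Set ℝ) (hBsub : B ⊆ Ioo (-2 * ε) (2 * ε))
    (b₀ b₁ : ℝ) (hb₀B : b₀ ∈ B) (hb₁B : b₁ ∈ B)
    (hmin : ∀ b ∈ B, b₀ ≤ b) (hmax : ∀ b ∈ B, b ≤ b₁)
    (hb₀ : b₀ ∈ Ioo (-2 * ε) (-ε)) (hb₁ : b₁ ∈ Ioo ε (2 * ε))
    (hgap : 2 * ε < b₁ - b₀ ∧ b₁ - b₀ < 4 * ε)
    (J : Set ℝ) (hJ₁ : Ioo c₀ c₁ ⊆ J) (hJ₂ : J ⊆ Icc c₀ c₁)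
    (hc₀ : c₀ ∈ J ∩ (AddSubgroup.closure B : Set ℝ))
    (hc₁ : c₁ ∈ J ∩ (AddSubgroup.closure B : Set ℝ)) :
    Disjoint (((c₀ - b₀) + ·) '' B) (((c₁ - b₁) + ·) '' B) ∧
    ((c₀ - b₀) + ·) '' B ⊆ J ∩ (AddSubgroup.closure B : Set ℝ) ∧
    ((c₁ - b₁) + ·) '' B ⊆ J ∩ (AddSubgroup.closure B : Set ℝ) :=
  endpoint_translates_disjoint_general ε c₀ c₁ hlen B b₀ b₁ hb₀B hb₁B hmin hmax hgap J hJ₁ hc₀ hc₁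
end

section
/- Let J be a finite interval, 0 < 8ε < length(J), let B be the von Neumann set constructed with β₀ = −2ε and β₁ = 2ε, and let G be the group generated by B. Set C = J ∩ G. Then there exists a countably infinite set A ⊆ ℝ such that A ⊕ B = C. -/
/-!
Linear independence over `ℚ` is what makes representations unique: if `g = b j + b k - b i` with
`i ≠ k`, the `k`-th coordinate of `g` is nonzero, so for a fixed `g` only finitely many `k` occur.
Enumerate `C` and build `A` greedily. The endpoints of the interval force the elements `c₀ - b 0`
and `c₁ - b 1`. An uncovered interior point `c` receives `c - b k`, with `k` chosen so that
`c - b k ∈ (c₀ - b 0, c₁ - b 1)`, which keeps `c - b k + B` inside `J` and holds for infinitely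
many `k` (the interval is longer than `b 1 - b 0`, and `b 0`, `b 1` are limits of subsequences of
`b`), and so that `c - b k + B` misses `a' + B` for every earlier `a'`, which excludes only finitely
many `k`. The same finiteness shows that a finite `A` would miss the points `x - b k + b 0` of `C`
for almost all `k` with `b k` near `b 0`.
-/

open Set Filter

/-- `IsDirectSum A B C` means `A + B = C` and every element of `C` has a unique
representation `a + b` with `a ∈ A`, `b ∈ B`. -/
def IsDirectSum {α : Type*} [Add α] (A B C : Set α) : Prop :=
  (∀ a ∈ A, ∀ b ∈ B, a + b ∈ C) ∧
  ∀ c ∈ C, ∃! p : α × α, p.1 ∈ A ∧ p.2 ∈ B ∧ p.1 + p.2 = c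

open Topology
open scoped Pointwise

section PartialDirectSum

variable {α : Type*} [Add α] {A B C : Set α}

def IsPartialDirectSum (A B C : Set α) : Prop :=
  (∀ a ∈ A, ∀ b ∈ B, a + b ∈ C) ∧
    ∀ a ∈ A, ∀ a' ∈ A, ∀ b ∈ B, ∀ b' ∈ B, a + b = a' + b' → a = a' ∧ b = b'

theorem IsDirectSum.subset_add (h : IsDirectSum A B C) : C ⊆ A + B := fun c hc =>
  let ⟨p, ⟨hp₁, hp₂, hp⟩, _⟩ := h.2 c hc
  ⟨p.1, hp₁, p.2, hp₂, hp⟩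

theorem IsPartialDirectSum.isDirectSum (h : IsPartialDirectSum A B C) (hC : C ⊆ A + B) :
    IsDirectSum A B C := by
  refine ⟨h.1, fun c hc => ?_⟩
  obtain ⟨a, ha, b, hb, rfl⟩ := hC hc
  refine ⟨(a, b), ⟨ha, hb, rfl⟩, ?_⟩
  rintro ⟨a', b'⟩ ⟨ha', hb', he⟩
  obtain ⟨rfl, rfl⟩ := h.2 a' ha' a ha b' hb' b hb he
  rfl

theorem isPartialDirectSum_iUnion {ι : Sort*} {F : ι → Set α} (hF : Directed (· ⊆ ·) F)
    (h : ∀ i, IsPartialDirectSum (F i) B C) : IsPartialDirectSum (⋃ i, F i) B C := by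
  simp only [IsPartialDirectSum, mem_iUnion]
  refine ⟨fun a ⟨i, ha⟩ => (h i).1 a ha, fun a ⟨i, ha⟩ a' ⟨i', ha'⟩ => ?_⟩
  obtain ⟨k, hik, hi'k⟩ := hF i i'
  exact (h k).2 a (hik ha) a' (hi'k ha')

theorem IsPartialDirectSum.insert [IsLeftCancelAdd α] {a : α} (h : IsPartialDirectSum A B C)
    (haC : ∀ b ∈ B, a + b ∈ C) (hdisj : ∀ a' ∈ A, ∀ b ∈ B, ∀ b' ∈ B, a + b ≠ a' + b') :
    IsPartialDirectSum (insert a A) B C := by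
  refine ⟨?_, ?_⟩
  · rintro x (rfl | hx)
    exacts [haC, h.1 x hx]
  · rintro x (rfl | hx) y (rfl | hy) b hb b' hb' he
    · exact ⟨rfl, add_left_cancel he⟩
    · exact absurd he (hdisj y hy b hb b' hb')
    · exact absurd he.symm (hdisj x hx b' hb' b hb)
    · exact h.2 x hx y hy b hb b' hb' he

theorem exists_isDirectSum_of_forall_extend [Nonempty α] (hC : C.Countable) (P : Set α → Prop)
    (hP : ∀ F, P F → F.Countable ∧ IsPartialDirectSum F B C) (h₀ : ∃ F, P F)
    (hext : ∀ F, P F → ∀ c ∈ C, ∃ F', F ⊆ F' ∧ P F' ∧ c ∈ F' + B) :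
    ∃ A, A.Countable ∧ IsDirectSum A B C := by
  obtain ⟨e, hCe⟩ := countable_iff_exists_subset_range.mp hC
  have hext' : ∀ F, P F → ∀ c, ∃ F', F ⊆ F' ∧ P F' ∧ (c ∈ C → c ∈ F' + B) := by
    intro F hF c
    by_cases hc : c ∈ C
    · obtain ⟨F', hFF', hF', hcF'⟩ := hext F hF c hc
      exact ⟨F', hFF', hF', fun _ => hcF'⟩
    · exact ⟨F, subset_rfl, hF, fun h => absurd h hc⟩
  choose! next subset_next P_next mem_next using hext'
  obtain ⟨F₀, hF₀⟩ := h₀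
  let F : ℕ → Set α := fun k => Nat.rec F₀ (fun k Fk => next Fk (e k)) k
  have hPF : ∀ k, P (F k) := fun k => Nat.rec hF₀ (fun k ih => P_next _ ih _) k
  have hmono : Monotone F := monotone_nat_of_le_succ fun k => subset_next _ (hPF k) _
  refine ⟨⋃ k, F k, countable_iUnion fun k => (hP _ (hPF k)).1,
    (isPartialDirectSum_iUnion hmono.directed_le fun k => (hP _ (hPF k)).2).isDirectSum ?_⟩
  rintro c hc
  obtain ⟨k, rfl⟩ := hCe hc
  exact add_subset_add (subset_iUnion F (k + 1)) subset_rfl (mem_next _ (hPF k) _ hc)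

end PartialDirectSum

section LinearIndependent

variable {ι K V : Type*} [Ring K] [CharZero K] [AddCommGroup V] [Module K V] {b : ι → V}

theorem LinearIndependent.finite_setOf_eq_add_sub (hb : LinearIndependent K b) (g : V) :
    {k | ∃ i j, i ≠ k ∧ g = b j + b k - b i}.Finite := by
  classical
  let v : ι → ι → ι → ι →₀ K := fun i j k =>
    Finsupp.single j 1 + Finsupp.single k 1 - Finsupp.single i 1
  have hv : ∀ i j k, Finsupp.linearCombination K b (v i j k) = b j + b k - b i := by
    simp [v]
  rcases eq_empty_or_nonempty {k | ∃ i j, i ≠ k ∧ g = b j + b k - b i} with h | ⟨k₀, i₀, j₀, -, rfl⟩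
  · rw [h]
    exact finite_empty
  refine (v i₀ j₀ k₀).support.finite_toSet.subset ?_
  rintro k ⟨i, j, hik, he⟩
  have hvv : v i j k = v i₀ j₀ k₀ := hb.finsuppLinearCombination_injective (by rw [hv, hv, he])
  rw [Finset.mem_coe, Finsupp.mem_support_iff, ← hvv]
  simp only [v, Finsupp.coe_add, Finsupp.coe_sub, Pi.add_apply, Pi.sub_apply,
    Finsupp.single_apply, if_neg hik, sub_zero]
  split_ifs <;> norm_num

theorem LinearIndependent.finite_setOf_sub_add_mem_add_range (hb : LinearIndependent K b)
    {F : Set V} (hF : F.Finite) (c : V) :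
    {k | ∃ i ≠ k, c - b k + b i ∈ F + range b}.Finite := by
  refine (hF.biUnion fun a _ => hb.finite_setOf_eq_add_sub (c - a)).subset ?_
  rintro k ⟨i, hik, a, ha, _, ⟨j, rfl⟩, he⟩
  refine mem_biUnion ha ⟨i, j, hik, ?_⟩
  calc c - a = c - b k + b i - a + b k - b i := by abel
    _ = b j + b k - b i := by rw [← show a + b j = _ from he]; abel

theorem LinearIndependent.infinite_of_infinite_setOf_sub_add_mem (hb : LinearIndependent K b)
    {A : Set V} {x : V} {i₀ : ι} (h : {k | x - b k + b i₀ ∈ A + range b}.Infinite) :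
    A.Infinite := by
  intro hA
  refine h (((hb.finite_setOf_sub_add_mem_add_range hA x).insert i₀).subset fun k hk => ?_)
  rcases eq_or_ne k i₀ with hk₀ | hk₀
  exacts [.inl hk₀, .inr ⟨i₀, hk₀.symm, hk⟩]

end LinearIndependent

theorem infinite_setOf_mem_of_tendsto_comp {ι X : Type*} [TopologicalSpace X] {b : ι → X}
    {g : ℕ → ι} {x : X} {U : Set X} (hg : g.Injective)
    (h : Tendsto (fun n => b (g n)) atTop (𝓝 x)) (hU : U ∈ 𝓝 x) : {k | b k ∈ U}.Infinite :=
  ((Nat.frequently_atTop_iff_infinite.mp (h.eventually hU).frequently).image hg.injOn).mono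
    (image_subset_iff.mpr fun _ hn => hn)

theorem countable_addSubgroupClosure_range {ι M : Type*} [Countable ι] [AddCommGroup M]
    (b : ι → M) : (AddSubgroup.closure (range b) : Set M).Countable := by
  rw [← Submodule.span_int_eq_addSubgroupClosure, Submodule.coe_toAddSubgroup,
    ← Finsupp.range_linearCombination, LinearMap.coe_range]
  exact countable_range _

section VonNeumann

variable {b : ℕ → ℝ} {c₀ c₁ : ℝ} {J : Set ℝ} {G : AddSubgroup ℝ}

/-- The decomposition of an endpoint of the interval is forced (`c₀ = (c₀ - b 0) + b 0`), so the
endpoints lying in `C` are covered from the start. -/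
def IsPartialDecomposition (b : ℕ → ℝ) (c₀ c₁ : ℝ) (C F : Set ℝ) : Prop :=
  F.Finite ∧ IsPartialDirectSum F (range b) C ∧ C \ Ioo c₀ c₁ ⊆ F + range b

theorem exists_isPartialDecomposition (hbG : ∀ k, b k ∈ G) (hmin : ∀ k, b 0 ≤ b k)
    (hmax : ∀ k, b k ≤ b 1) (hgap : 2 * (b 1 - b 0) < c₁ - c₀) (hJ₁ : Ioo c₀ c₁ ⊆ J)
    (hJ₂ : J ⊆ Icc c₀ c₁) : ∃ F, IsPartialDecomposition b c₀ c₁ (J ∩ G) F := by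
  refine ⟨{a | (c₀ ∈ J ∩ G ∧ a = c₀ - b 0) ∨ (c₁ ∈ J ∩ G ∧ a = c₁ - b 1)},
    (toFinite {c₀ - b 0, c₁ - b 1}).subset ?_, ⟨?_, ?_⟩, ?_⟩
  · rintro a (⟨-, rfl⟩ | ⟨-, rfl⟩) <;> simp
  · rintro a (⟨hc, rfl⟩ | ⟨hc, rfl⟩) _ ⟨i, rfl⟩
    · refine ⟨?_, G.add_mem (G.sub_mem hc.2 (hbG 0)) (hbG i)⟩
      rcases (hmin i).eq_or_lt with h | h
      · rw [← h, sub_add_cancel]; exact hc.1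
      · exact hJ₁ ⟨by linarith, by linarith [hmax i]⟩
    · refine ⟨?_, G.add_mem (G.sub_mem hc.2 (hbG 1)) (hbG i)⟩
      rcases (hmax i).eq_or_lt with h | h
      · rw [h, sub_add_cancel]; exact hc.1
      · exact hJ₁ ⟨by linarith [hmin i], by linarith⟩
  · rintro a (⟨-, rfl⟩ | ⟨-, rfl⟩) a' (⟨-, rfl⟩ | ⟨-, rfl⟩) _ ⟨i, rfl⟩ _ ⟨j, rfl⟩ he
    · exact ⟨rfl, add_left_cancel he⟩
    · linarith [hmax i, hmin j]
    · linarith [hmin i, hmax j]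
    · exact ⟨rfl, add_left_cancel he⟩
  · rintro c ⟨hc, hcI⟩
    obtain ⟨h₀, h₁⟩ := hJ₂ hc.1
    rcases h₀.eq_or_lt with h₀ | h₀
    · exact mem_add.mpr ⟨c₀ - b 0, .inl ⟨h₀ ▸ hc, rfl⟩, b 0, mem_range_self 0,
        by rw [sub_add_cancel, h₀]⟩
    rcases h₁.eq_or_lt with h₁ | h₁
    · exact mem_add.mpr ⟨c₁ - b 1, .inr ⟨h₁ ▸ hc, rfl⟩, b 1, mem_range_self 1,
        by rw [sub_add_cancel, h₁]⟩
    exact absurd ⟨h₀, h₁⟩ hcI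

theorem infinite_setOf_sub_mem_Ioo (htend₀ : Tendsto (fun n => b (2 * n)) atTop (𝓝 (b 0)))
    (htend₁ : Tendsto (fun n => b (2 * n + 1)) atTop (𝓝 (b 1)))
    (hgap : 2 * (b 1 - b 0) < c₁ - c₀) {c : ℝ} (hc : c ∈ Ioo c₀ c₁) :
    {k | c - b k ∈ Ioo (c₀ - b 0) (c₁ - b 1)}.Infinite := by
  obtain ⟨hc₀, hc₁⟩ := hc
  have hsub : {k | b k ∈ Ioo (c - c₁ + b 1) (c - c₀ + b 0)} ⊆
      {k | c - b k ∈ Ioo (c₀ - b 0) (c₁ - b 1)} := fun k ⟨h₀, h₁⟩ =>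
    ⟨by linarith, by linarith⟩
  refine Infinite.mono hsub ?_
  rcases lt_or_ge (c - c₁ + b 1) (b 0) with h | h
  · exact infinite_setOf_mem_of_tendsto_comp (fun m n h => by simpa using h) htend₀
      (Ioo_mem_nhds h (by linarith))
  · exact infinite_setOf_mem_of_tendsto_comp (fun m n h => by simpa using h) htend₁
      (Ioo_mem_nhds (by linarith) (by linarith))

theorem IsPartialDecomposition.exists_extend (hli : LinearIndependent ℚ b) (hbG : ∀ k, b k ∈ G)
    (hmin : ∀ k, b 0 ≤ b k) (hmax : ∀ k, b k ≤ b 1) (hgap : 2 * (b 1 - b 0) < c₁ - c₀)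
    (htend₀ : Tendsto (fun n => b (2 * n)) atTop (𝓝 (b 0)))
    (htend₁ : Tendsto (fun n => b (2 * n + 1)) atTop (𝓝 (b 1))) (hJ₁ : Ioo c₀ c₁ ⊆ J)
    {F : Set ℝ} (hF : IsPartialDecomposition b c₀ c₁ (J ∩ G) F) {c : ℝ} (hc : c ∈ J ∩ G) :
    ∃ F', F ⊆ F' ∧ IsPartialDecomposition b c₀ c₁ (J ∩ G) F' ∧ c ∈ F' + range b := by
  obtain ⟨hFfin, hFsum, hFend⟩ := hF
  by_cases hcov : c ∈ F + range b
  · exact ⟨F, subset_rfl, ⟨hFfin, hFsum, hFend⟩, hcov⟩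
  have hcI : c ∈ Ioo c₀ c₁ := by_contra fun h => hcov (hFend ⟨hc, h⟩)
  obtain ⟨k, hk, hfresh⟩ := ((infinite_setOf_sub_mem_Ioo htend₀ htend₁ hgap hcI).sdiff
    (hli.finite_setOf_sub_add_mem_add_range hFfin c)).nonempty
  refine ⟨insert (c - b k) F, subset_insert _ _, ⟨hFfin.insert _, hFsum.insert ?_ ?_,
    hFend.trans (add_subset_add (subset_insert _ _) subset_rfl)⟩,
    ⟨c - b k, mem_insert _ _, b k, mem_range_self k, sub_add_cancel _ _⟩⟩
  · rintro _ ⟨i, rfl⟩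
    exact ⟨hJ₁ ⟨by linarith [hk.1, hmin i], by linarith [hk.2, hmax i]⟩,
      G.add_mem (G.sub_mem hc.2 (hbG k)) (hbG i)⟩
  · rintro a ha _ ⟨i, rfl⟩ _ ⟨j, rfl⟩ he
    obtain rfl : i = k := by_contra fun hik =>
      hfresh ⟨i, hik, a, ha, b j, mem_range_self j, he.symm⟩
    exact hcov ⟨a, ha, b j, mem_range_self j, show a + b j = c by linarith⟩

theorem infinite_of_inter_subset_add_range (hli : LinearIndependent ℚ b) (hbG : ∀ k, b k ∈ G)
    (hb : b 0 < b 1) (hgap : 2 * (b 1 - b 0) < c₁ - c₀)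
    (htend₀ : Tendsto (fun n => b (2 * n)) atTop (𝓝 (b 0))) (hJ₁ : Ioo c₀ c₁ ⊆ J) {A : Set ℝ}
    (hA : J ∩ G ⊆ A + range b) : A.Infinite := by
  set δ := (b 1 - b 0) / 2 with hδ
  obtain ⟨m, ⟨hm₀, hm₁⟩, -⟩ := existsUnique_add_zsmul_mem_Ioc (sub_pos.mpr hb) 0 (c₀ + δ)
  rw [zero_add] at hm₀ hm₁
  have hxG : m • (b 1 - b 0) ∈ G := G.zsmul_mem (G.sub_mem (hbG 1) (hbG 0)) m
  refine hli.infinite_of_infinite_setOf_sub_add_mem (x := m • (b 1 - b 0)) (i₀ := 0) ?_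
  refine (infinite_setOf_mem_of_tendsto_comp (fun m n h => by simpa using h) htend₀
    (Metric.ball_mem_nhds (b 0) (by positivity : 0 < δ))).mono fun k hk => hA ⟨hJ₁ ?_,
      G.add_mem (G.sub_mem hxG (hbG k)) (hbG 0)⟩
  rw [mem_ofPred_eq, Metric.mem_ball, Real.dist_eq, abs_lt] at hk
  constructor <;> linarith [hk.1, hk.2]

end VonNeumann

theorem exists_directSum_decomposition_of_interval_inter_group_general
    (ε c₀ c₁ : ℝ) (hlen : 8 * ε < c₁ - c₀)
    (b : ℕ → ℝ)
    (hli : LinearIndependent ℚ b)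
    (hb₀ : b 0 ∈ Ioo (-2 * ε) (-ε)) (hb₁ : b 1 ∈ Ioo ε (2 * ε))
    (hmin : ∀ n, b 0 ≤ b n) (hmax : ∀ n, b n ≤ b 1)
    (htend₀ : Tendsto (fun n : ℕ => b (2 * n)) atTop (nhds (b 0)))
    (htend₁ : Tendsto (fun n : ℕ => b (2 * n + 1)) atTop (nhds (b 1)))
    (J : Set ℝ) (hJ₁ : Ioo c₀ c₁ ⊆ J) (hJ₂ : J ⊆ Icc c₀ c₁) :
    ∃ A : Set ℝ, A.Countable ∧ A.Infinite ∧
      IsDirectSum A (Set.range b) (J ∩ (AddSubgroup.closure (Set.range b) : Set ℝ)) := by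
  have hb : b 0 < b 1 := by linarith [hb₀.2, hb₁.1, hb₁.2]
  have hgap : 2 * (b 1 - b 0) < c₁ - c₀ := by linarith [hb₀.1, hb₁.2]
  have hbG : ∀ k, b k ∈ AddSubgroup.closure (range b) := fun k =>
    AddSubgroup.subset_closure (mem_range_self k)
  obtain ⟨A, hAc, hA⟩ := exists_isDirectSum_of_forall_extend
    ((countable_addSubgroupClosure_range b).mono inter_subset_right)
    (IsPartialDecomposition b c₀ c₁ _) (fun F hF => ⟨hF.1.countable, hF.2.1⟩)
    (exists_isPartialDecomposition hbG hmin hmax hgap hJ₁ hJ₂)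
    (fun F hF c hc => hF.exists_extend hli hbG hmin hmax hgap htend₀ htend₁ hJ₁ hc)
  exact ⟨A, hAc, infinite_of_inter_subset_add_range hli hbG hb hgap htend₀ hJ₁ hA.subset_add, hA⟩

/-- Theorem (von Neumann): with B the von Neumann set and G the subgroup it
generates, C = J ∩ G is a direct sum A ⊕ B for some countably infinite A. -/
theorem exists_directSum_decomposition_of_interval_inter_group
    (ε c₀ c₁ : ℝ) (hε : 0 < ε) (hlen : 8 * ε < c₁ - c₀)
    (b : ℕ → ℝ) (hinj : Function.Injective b)
    (hli : LinearIndependent ℚ b)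
    (hrange : Set.range b ⊆ Ioo (-2 * ε) (2 * ε))
    (hb₀ : b 0 ∈ Ioo (-2 * ε) (-ε)) (hb₁ : b 1 ∈ Ioo ε (2 * ε))
    (hmin : ∀ n, b 0 ≤ b n) (hmax : ∀ n, b n ≤ b 1)
    (hacc : ∀ δ : ℝ, 0 < δ → {n : ℕ | b 0 + δ < b n ∧ b n < b 1 - δ}.Finite)
    (htend₀ : Tendsto (fun n : ℕ => b (2 * n)) atTop (nhds (b 0)))
    (htend₁ : Tendsto (fun n : ℕ => b (2 * n + 1)) atTop (nhds (b 1)))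
    (J : Set ℝ) (hJ₁ : Ioo c₀ c₁ ⊆ J) (hJ₂ : J ⊆ Icc c₀ c₁) :
    ∃ A : Set ℝ, A.Countable ∧ A.Infinite ∧
      IsDirectSum A (Set.range b) (J ∩ (AddSubgroup.closure (Set.range b) : Set ℝ)) :=
  exists_directSum_decomposition_of_interval_inter_group_general ε c₀ c₁ hlen b hli hb₀ hb₁ hmin
    hmax htend₀ htend₁ J hJ₁ hJ₂
end

section
/- Every finite interval I ⊆ ℝ (open, closed, or half-open) can be partitioned into countably infinitely many pairwise disjoint sets that are all translates of a single set A; equivalently, there exist an uncountable set A and a countably infinite set B of real numbers such that A ⊕ B = I. -/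
open Set

/-!
Let `L = c₁ - c₀`. From a Hamel basis of `ℝ` over `ℚ` take `B = {0} ∪ {rational multiples of
countably many basis vectors}`, with `m = max B < L`, the elements of `B` dense in `[0, m]`, and `L`
having a nonzero coordinate on a basis vector that `B` does not use. The cosets of the countable
group generated by `B` cut `I` into countable pieces, and each piece is tiled by translates `a + B`
greedily along an enumeration. The endpoints of `I`, if present, are covered first by `c₀ + B` and
`c₁ - m + B`, which are disjoint because that coordinate vanishes on `B` but not on `L`. An
uncovered interior point `x` is then covered by `x - b + B`, where `b ∈ B` lies in the window that
makes the tile fit in `I`, and its basis vector occurs in none of the finitely many differences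
`x - a` with `a` already chosen: comparing this coordinate shows that the new tile meets none of the
old ones.
-/

open Function

section Packing

variable {G : Type*}

def IsPacking [Add G] (A B X : Set G) : Prop :=
  MapsTo (uncurry (· + ·)) (A ×ˢ B) X ∧ InjOn (uncurry (· + ·)) (A ×ˢ B)

theorem isDirectSum_iff_bijOn [Add G] {A B C : Set G} :
    IsDirectSum A B C ↔ BijOn (uncurry (· + ·)) (A ×ˢ B) C := by
  refine ⟨fun ⟨hmaps, huniq⟩ => ⟨fun p hp => hmaps _ hp.1 _ hp.2, ?_, ?_⟩, fun h => ⟨?_, ?_⟩⟩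
  · intro p hp p' hp' hpp'
    exact (huniq _ (hmaps _ hp.1 _ hp.2)).unique ⟨hp.1, hp.2, rfl⟩ ⟨hp'.1, hp'.2, hpp'.symm⟩
  · intro c hc
    obtain ⟨p, ⟨hp₁, hp₂, rfl⟩, -⟩ := huniq c hc
    exact ⟨p, ⟨hp₁, hp₂⟩, rfl⟩
  · exact fun a ha b hb => h.mapsTo (mk_mem_prod ha hb)
  · intro c hc
    obtain ⟨p, hp, rfl⟩ := h.surjOn hc
    exact ⟨p, ⟨hp.1, hp.2, rfl⟩, fun p' hp' => h.injOn ⟨hp'.1, hp'.2.1⟩ hp hp'.2.2⟩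

theorem IsPacking.insert [Add G] [IsLeftCancelAdd G] {A B X : Set G} {a : G}
    (hA : IsPacking A B X) (ha : ∀ b ∈ B, a + b ∈ X)
    (hdisj : ∀ b ∈ B, ∀ a' ∈ A, ∀ b' ∈ B, a + b ≠ a' + b') :
    IsPacking (insert a A) B X := by
  refine ⟨?_, ?_⟩
  · rintro ⟨a₁, b₁⟩ ⟨rfl | ha₁, hb₁⟩
    exacts [ha b₁ hb₁, hA.1 ⟨ha₁, hb₁⟩]
  · rintro ⟨a₁, b₁⟩ ⟨rfl | ha₁, hb₁⟩ ⟨a₂, b₂⟩ ⟨rfl | ha₂, hb₂⟩ (heq : _ + b₁ = _ + b₂)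
    · exact Prod.ext rfl (add_left_cancel heq)
    · exact absurd heq (hdisj _ hb₁ _ ha₂ _ hb₂)
    · exact absurd heq.symm (hdisj _ hb₂ _ ha₁ _ hb₁)
    · exact hA.2 ⟨ha₁, hb₁⟩ ⟨ha₂, hb₂⟩ heq

theorem IsPacking.inter_preimage [Add G] {Q : Type*} {A B X : Set G} {π : G → Q}
    (hA : IsPacking A B X) (hπ : ∀ a, ∀ b ∈ B, π (a + b) = π a) (q : Q) :
    IsPacking (A ∩ π ⁻¹' {q}) B (X ∩ π ⁻¹' {q}) :=
  ⟨fun _ hp => ⟨hA.1 ⟨hp.1.1, hp.2⟩, (hπ _ _ hp.2).trans hp.1.2⟩,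
    hA.2.mono (prod_mono inter_subset_left Subset.rfl)⟩

end Packing

section Greedy

variable {G : Type*} [AddGroup G] {B X : Set G}

open scoped Classical in
noncomputable def greedyStep (B X A : Set G) (x : G) : Set G :=
  if h : ∃ b ∈ B, IsPacking (insert (x - b) A) B X then insert (x - h.choose) A else A

noncomputable def greedyChain (B X A₀ : Set G) (e : ℕ → G) : ℕ → Set G
  | 0 => A₀
  | n + 1 => greedyStep B X (greedyChain B X A₀ e n) (e n)

theorem subset_greedyStep (A : Set G) (x : G) : A ⊆ greedyStep B X A x := by
  unfold greedyStep
  split_ifs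
  exacts [subset_insert _ _, Subset.rfl]

theorem IsPacking.greedyStep {A : Set G} (hA : IsPacking A B X) (x : G) :
    IsPacking (greedyStep B X A x) B X := by
  unfold _root_.greedyStep
  split_ifs with h
  exacts [h.choose_spec.2, hA]

theorem Set.Finite.greedyStep {A : Set G} (hA : A.Finite) (x : G) :
    (greedyStep B X A x).Finite := by
  unfold _root_.greedyStep
  split_ifs
  exacts [hA.insert _, hA]

theorem exists_mem_greedyStep_add_eq {A : Set G} {x : G}
    (h : ∃ b ∈ B, IsPacking (insert (x - b) A) B X) :
    ∃ a ∈ greedyStep B X A x, ∃ b ∈ B, a + b = x := by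
  rw [greedyStep, dif_pos h]
  exact ⟨_, mem_insert _ _, _, h.choose_spec.1, sub_add_cancel _ _⟩

theorem monotone_greedyChain (A₀ : Set G) (e : ℕ → G) : Monotone (greedyChain B X A₀ e) :=
  monotone_nat_of_le_succ fun _ => subset_greedyStep _ _

theorem exists_bijOn_of_forall_extend (hX : X.Countable) {A₀ : Set G} (hA₀ : A₀.Finite)
    (h₀ : IsPacking A₀ B X)
    (hext : ∀ A, A₀ ⊆ A → A.Finite → IsPacking A B X → ∀ x ∈ X,
      (∀ a ∈ A, ∀ b ∈ B, a + b ≠ x) → ∃ b ∈ B, IsPacking (insert (x - b) A) B X) :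
    ∃ A, BijOn (uncurry (· + ·)) (A ×ˢ B) X := by
  obtain ⟨e, he⟩ := countable_iff_exists_subset_range.mp hX
  set C := greedyChain B X A₀ e
  have hmono : Monotone C := monotone_greedyChain A₀ e
  have hinv : ∀ n, A₀ ⊆ C n ∧ (C n).Finite ∧ IsPacking (C n) B X := by
    intro n
    induction n with
    | zero => exact ⟨Subset.rfl, hA₀, h₀⟩
    | succ n ih =>
      exact ⟨ih.1.trans (hmono n.le_succ), ih.2.1.greedyStep _, ih.2.2.greedyStep _⟩
  have hcover : ∀ n, e n ∈ X → ∃ a ∈ C (n + 1), ∃ b ∈ B, a + b = e n := by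
    intro n hn
    by_cases hcov : ∃ a ∈ C n, ∃ b ∈ B, a + b = e n
    · obtain ⟨a, ha, hab⟩ := hcov
      exact ⟨a, hmono n.le_succ ha, hab⟩
    · push Not at hcov
      exact exists_mem_greedyStep_add_eq (hext _ (hinv n).1 (hinv n).2.1 (hinv n).2.2 _ hn hcov)
  refine ⟨⋃ n, C n, ?_, ?_, ?_⟩
  · rw [iUnion_prod_const]
    exact mapsTo_iUnion.2 fun n => (hinv n).2.2.1
  · rw [iUnion_prod_const]
    have hmono' : Monotone fun n => C n ×ˢ B := fun _ _ h => prod_mono (hmono h) Subset.rfl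
    exact inj_on_iUnion_of_directed hmono'.directed_le fun n => (hinv n).2.2.2
  · intro x hx
    obtain ⟨n, rfl⟩ := he hx
    obtain ⟨a, ha, b, hb, hab⟩ := hcover n hx
    exact ⟨(a, b), ⟨mem_iUnion.2 ⟨n + 1, ha⟩, hb⟩, hab⟩

end Greedy

theorem bijOn_iUnion_of_bijOn_fiber {α β ι : Type*} {f : α → β} {π : β → ι} {s : ι → Set α}
    {t : Set β} (h : ∀ i, BijOn f (s i) (t ∩ π ⁻¹' {i})) : BijOn f (⋃ i, s i) t := by
  have ht : t = ⋃ i, t ∩ π ⁻¹' {i} := by ext; simp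
  rw [ht]
  refine bijOn_iUnion h fun x hx y hy hxy => ?_
  obtain ⟨i, hi⟩ := mem_iUnion.1 hx
  obtain ⟨j, hj⟩ := mem_iUnion.1 hy
  have hij : i = j := by
    rw [← ((h i).mapsTo hi).2, ← ((h j).mapsTo hj).2, hxy]
  subst hij
  exact (h i).injOn hi hj hxy

theorem Set.Countable.addSubgroupClosure {M : Type*} [AddCommGroup M] {s : Set M}
    (hs : s.Countable) : (AddSubgroup.closure s : Set M).Countable := by
  have := hs.to_subtype
  rw [← Submodule.span_int_eq_addSubgroupClosure, Submodule.coe_toAddSubgroup,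
    ← Subtype.range_coe (s := s)]
  exact countable_coe_iff.mp (inferInstance : Countable (Submodule.span ℤ (range ((↑) : s → M))))

theorem AddSubgroup.countable_preimage_mk_singleton {M : Type*} [AddCommGroup M]
    {V : AddSubgroup M} (hV : (V : Set M).Countable) (q : M ⧸ V) :
    ((↑) ⁻¹' {q} : Set M).Countable := by
  obtain ⟨x, rfl⟩ := QuotientAddGroup.mk_surjective q
  rw [← image_singleton, QuotientAddGroup.preimage_image_mk_eq_add, ← image2_add]
  exact (countable_singleton x).image2 hV _

theorem eq_of_add_eq_add_of_map_eq_zero {K M : Type*} [Field K] [CharZero K] [AddCommGroup M]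
    [Module K M] (f : M →ₗ[K] K) {y b b₁ b₂ : M} (hb : f b ≠ 0) (hy : f y = 0)
    (hb₁ : b₁ = b ∨ f b₁ = 0) (hb₂ : b₂ = b ∨ f b₂ = 0) (h : y + b₁ = b + b₂) : b₁ = b := by
  have hf := congrArg f h
  rw [map_add, map_add, hy, zero_add] at hf
  refine hb₁.resolve_right fun h₁ => ?_
  rcases hb₂ with rfl | h₂
  · exact hb (add_self_eq_zero.1 (hf.symm.trans h₁))
  · rw [h₁, h₂, add_zero] at hf
    exact hb hf.symm

theorem Module.Basis.exists_forall_add_eq_add_imp_eq {ι κ K M : Type*} [Field K] [CharZero K]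
    [AddCommGroup M] [Module K M] (H : Module.Basis ι K M) {e : κ → ι} (he : Function.Injective e)
    (r : κ → K)
    {B : Set M} (hB : B ⊆ insert 0 (range fun k => r k • H (e k))) {F : Set M} (hF : F.Finite)
    {S : Set κ} (hS : S.Infinite) (hr : ∀ k ∈ S, r k ≠ 0) :
    ∃ k ∈ S, ∀ y ∈ F, ∀ b₁ ∈ B, ∀ b₂ ∈ B, y + b₁ = r k • H (e k) + b₂ → b₁ = r k • H (e k) := by
  have hbad : {k | ∃ y ∈ F, H.coord (e k) y ≠ 0}.Finite :=
    (hF.biUnion fun y _ => (H.repr y).support.finite_toSet.preimage he.injOn).subset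
      fun k ⟨y, hy, hk⟩ => mem_biUnion hy (by simpa [Module.Basis.coord_apply] using hk)
  obtain ⟨k, hkS, hk⟩ := (hS.sdiff hbad).nonempty
  have hcoord : ∀ b ∈ B, b = r k • H (e k) ∨ H.coord (e k) b = 0 := by
    rintro b hb
    rcases hB hb with rfl | ⟨k', rfl⟩
    · exact Or.inr (map_zero _)
    · rcases eq_or_ne k' k with rfl | hne
      · exact Or.inl rfl
      · right
        simp [Module.Basis.coord_apply, Finsupp.single_eq_of_ne (he.ne hne).symm]
  refine ⟨k, hkS, fun y hy b₁ hb₁ b₂ hb₂ h => eq_of_add_eq_add_of_map_eq_zero (H.coord (e k))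
    ?_ ?_ (hcoord b₁ hb₁) (hcoord b₂ hb₂) h⟩
  · simpa [Module.Basis.coord_apply] using hr k hkS
  · exact not_not.1 fun hy' => hk ⟨y, hy, hy'⟩

theorem exists_rat_smul_mem_Ioo {K : Type*} [Field K] [LinearOrder K] [IsStrictOrderedRing K]
    [Archimedean K] {x p q : K} (hx : x ≠ 0) (hpq : p < q) : ∃ r : ℚ, r • x ∈ Ioo p q := by
  simp only [Rat.smul_def]
  rcases hx.lt_or_gt with hneg | hpos
  · obtain ⟨r, hqr, hrp⟩ := exists_rat_btwn (div_lt_div_of_neg_of_lt hneg hpq)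
    exact ⟨r, (lt_div_iff_of_neg hneg).1 hrp, (div_lt_iff_of_neg hneg).1 hqr⟩
  · obtain ⟨r, hpr, hrq⟩ := exists_rat_btwn (div_lt_div_of_pos_right hpq hpos)
    exact ⟨r, (div_lt_iff₀ hpos).1 hpr, (lt_div_iff₀ hpos).1 hrq⟩

theorem Module.Basis.infinite_index {ι R M : Type*} [Semiring R] [Countable R] [AddCommMonoid M]
    [Module R M] [Uncountable M] (H : Module.Basis ι R M) : Infinite ι := by
  by_contra hfin
  rw [not_infinite_iff_finite] at hfin
  have := Module.Finite.of_basis H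
  exact not_countable (Finsupp.Countable.of_moduleFinite (R := R) (M := M))

theorem exists_injective_forall_ne (κ : Type*) {ι : Type*} [Countable κ] [Infinite ι] (i₀ : ι) :
    ∃ e : κ → ι, Injective e ∧ ∀ k, e k ≠ i₀ := by
  obtain ⟨φ, hφ⟩ := Countable.exists_injective_nat κ
  let s := (finite_singleton i₀).infinite_compl.natEmbedding
  exact ⟨fun k => s (φ k), Subtype.val_injective.comp (s.injective.comp hφ), fun k => (s (φ k)).2⟩

/-- The set of translations `B` of a tiling of an interval of length `L`. -/
structure SteinhausBase (B : Set ℝ) (m L : ℝ) : Prop where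
  countable : B.Countable
  zero_mem : 0 ∈ B
  mem : m ∈ B
  subset_Icc : B ⊆ Icc 0 m
  pos : 0 < m
  lt : m < L
  add_ne_add : ∀ b₁ ∈ B, ∀ b₂ ∈ B, L + b₁ ≠ m + b₂
  generic : ∀ F : Set ℝ, F.Finite → ∀ u v, 0 ≤ u → u < v → v ≤ m →
    ∃ b ∈ B ∩ Ioo u v, ∀ y ∈ F, ∀ b₁ ∈ B, ∀ b₂ ∈ B, y + b₁ = b + b₂ → b₁ = b

theorem exists_steinhausBase {L : ℝ} (hL : 0 < L) : ∃ B m, SteinhausBase B m L := by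
  let H := Module.Basis.ofVectorSpace ℚ ℝ
  have := H.infinite_index
  obtain ⟨i₀, hi₀⟩ : ∃ i₀, H.coord i₀ L ≠ 0 :=
    not_forall.1 fun h => hL.ne' (H.forall_coord_eq_zero_iff.1 h)
  -- `none` indexes `m`; `some (j, (p, q))` indexes the `j`-th element of `B` placed in `(p, q)`.
  let κ := Option (ℕ × {pq : ℚ × ℚ // pq.1 < pq.2})
  obtain ⟨e, he, he₀⟩ := exists_injective_forall_ne κ i₀
  have hr : ∀ k : κ, ∃ r : ℚ, r • H (e k) ∈ k.elim (Ioo 0 L) fun t => Ioo t.2.1.1 t.2.1.2 := by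
    rintro (_ | ⟨j, ⟨p, q⟩, hpq⟩)
    · exact exists_rat_smul_mem_Ioo (H.ne_zero _) hL
    · exact exists_rat_smul_mem_Ioo (H.ne_zero _) (by exact_mod_cast hpq)
  choose r hr using hr
  let w : κ → ℝ := fun k => r k • H (e k)
  let m := w none
  have hm : m ∈ Ioo 0 L := hr none
  have hw₀ : ∀ k, H.coord i₀ (w k) = 0 := fun k => by
    simp [w, Module.Basis.coord_apply, Finsupp.single_eq_of_ne (he₀ k).symm]
  let B := insert 0 (range w ∩ Ioc 0 m)
  have hB : B ⊆ insert 0 (range w) := insert_subset_insert inter_subset_left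
  refine ⟨B, m, ⟨?_, mem_insert _ _, mem_insert_of_mem _ ⟨mem_range_self _, hm.1, le_rfl⟩, ?_, hm.1,
    hm.2, ?_, ?_⟩⟩
  · exact ((countable_range w).mono inter_subset_left).insert 0
  · rintro b (rfl | ⟨-, hb⟩)
    exacts [⟨le_rfl, hm.1.le⟩, Ioc_subset_Icc_self hb]
  · intro b₁ hb₁ b₂ hb₂ h
    have hcoord : ∀ b ∈ B, H.coord i₀ b = 0 := by
      rintro b hb
      rcases hB hb with rfl | ⟨k, rfl⟩
      exacts [map_zero _, hw₀ k]
    have := congrArg (H.coord i₀) h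
    rw [map_add, map_add, hcoord _ hb₁, hcoord _ hb₂, hw₀, add_zero, add_zero] at this
    exact hi₀ this
  · intro F hF u v hu huv hv
    obtain ⟨p, hup, hpv⟩ := exists_rat_btwn huv
    obtain ⟨q, hpq, hqv⟩ := exists_rat_btwn hpv
    let k : ℕ → κ := fun j => some (j, ⟨(p, q), by exact_mod_cast hpq⟩)
    have hk : Injective k := fun j j' h => (Prod.ext_iff.1 (Option.some_injective _ h)).1
    have hwk : ∀ j, w (k j) ∈ Ioo u v := fun j => ⟨hup.trans (hr (k j)).1, (hr (k j)).2.trans hqv⟩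
    obtain ⟨_, ⟨j, rfl⟩, hgen⟩ := H.exists_forall_add_eq_add_imp_eq he r hB hF
      (infinite_range_of_injective hk)
      (by rintro _ ⟨j, rfl⟩ h0; exact (hu.trans_lt (hwk j).1).ne' (by simp [w, h0]))
    exact ⟨w (k j), ⟨mem_insert_of_mem _ ⟨mem_range_self _, hu.trans_lt (hwk j).1,
      (hwk j).2.le.trans hv⟩, hwk j⟩, hgen⟩

def endpointTiles (I : Set ℝ) (c₀ c₁ m : ℝ) : Set ℝ :=
  {a | a = c₀ ∧ c₀ ∈ I ∨ a = c₁ - m ∧ c₁ ∈ I}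

theorem finite_endpointTiles {I : Set ℝ} {c₀ c₁ m : ℝ} : (endpointTiles I c₀ c₁ m).Finite :=
  (toFinite {c₀, c₁ - m}).subset fun a ha => by rcases ha with ⟨rfl, -⟩ | ⟨rfl, -⟩ <;> simp

namespace SteinhausBase

variable {B : Set ℝ} {m c₀ c₁ : ℝ} {I : Set ℝ}

theorem infinite {L : ℝ} (hB : SteinhausBase B m L) : B.Infinite := fun hfin => by
  obtain ⟨b, ⟨hbB, hb⟩, hgen⟩ := hB.generic B hfin 0 m le_rfl hB.pos le_rfl
  exact hb.1.ne (hgen b hbB 0 hB.zero_mem 0 hB.zero_mem rfl)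

theorem exists_tile (hB : SteinhausBase B m (c₁ - c₀)) {A : Set ℝ} (hA : A.Finite) {x : ℝ}
    (hx : x ∈ Ioo c₀ c₁) (hcov : ∀ a ∈ A, ∀ b ∈ B, a + b ≠ x) :
    ∃ b ∈ B, (∀ b' ∈ B, x - b + b' ∈ Ioo c₀ c₁) ∧
      ∀ b₁ ∈ B, ∀ a ∈ A, ∀ b₂ ∈ B, x - b + b₁ ≠ a + b₂ := by
  have := hB.pos
  have := hB.lt
  -- a summand `b` in this window makes the tile `x - b + B ⊆ x - b + [0, m]` fit in `(c₀, c₁)`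
  obtain ⟨b, ⟨hbB, hbu, hbv⟩, hgen⟩ := hB.generic ((x - ·) '' A) (hA.image _)
    (max (x - c₁ + m) 0) (min (x - c₀) m) (le_max_right _ _)
    (by simp only [max_lt_iff, lt_min_iff]; constructor <;> constructor <;> linarith [hx.1, hx.2])
    (min_le_right _ _)
  rw [max_lt_iff] at hbu
  rw [lt_min_iff] at hbv
  refine ⟨b, hbB, fun b' hb' => ?_, fun b₁ hb₁ a ha b₂ hb₂ h => ?_⟩
  · have := hB.subset_Icc hb'
    constructor <;> linarith [this.1, this.2]
  · obtain rfl := hgen (x - a) (mem_image_of_mem _ ha) b₁ hb₁ b₂ hb₂ (by linarith)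
    exact hcov a ha b₂ hb₂ (by linarith)

theorem isPacking_endpointTiles (hB : SteinhausBase B m (c₁ - c₀)) (hI₁ : Ioo c₀ c₁ ⊆ I) :
    IsPacking (endpointTiles I c₀ c₁ m) B I := by
  have := hB.lt
  refine ⟨?_, ?_⟩
  · rintro ⟨a, b⟩ ⟨ha, hb : b ∈ B⟩
    obtain ⟨hb₀, hbm⟩ := hB.subset_Icc hb
    rcases ha with ⟨rfl, h₀⟩ | ⟨rfl, h₁⟩
    · rcases hb₀.eq_or_lt with rfl | hb₀
      · simpa using h₀
      · exact hI₁ ⟨by simp [hb₀], by simp only [uncurry_apply_pair]; linarith⟩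
    · rcases hbm.eq_or_lt with rfl | hbm
      · simpa using h₁
      · exact hI₁ ⟨by simp only [uncurry_apply_pair]; linarith,
          by simp only [uncurry_apply_pair]; linarith⟩
  · rintro ⟨a₁, b₁⟩ ⟨ha₁, hb₁⟩ ⟨a₂, b₂⟩ ⟨ha₂, hb₂⟩ (h : a₁ + b₁ = a₂ + b₂)
    suffices a₁ = a₂ by subst this; exact Prod.ext rfl (add_left_cancel h)
    rcases ha₁ with ⟨rfl, -⟩ | ⟨rfl, -⟩ <;> rcases ha₂ with ⟨rfl, -⟩ | ⟨rfl, -⟩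
    · rfl
    · exact absurd (by linarith) (hB.add_ne_add b₂ hb₂ b₁ hb₁)
    · exact absurd (by linarith) (hB.add_ne_add b₁ hb₁ b₂ hb₂)
    · rfl

theorem exists_bijOn_fiber (hB : SteinhausBase B m (c₁ - c₀)) (hI₁ : Ioo c₀ c₁ ⊆ I)
    (hI₂ : I ⊆ Icc c₀ c₁) (q : ℝ ⧸ AddSubgroup.closure B) :
    ∃ A, BijOn (uncurry (· + ·)) (A ×ˢ B) (I ∩ (↑) ⁻¹' {q}) := by
  have hπ : ∀ a : ℝ, ∀ b ∈ B, ((a + b : ℝ) : ℝ ⧸ AddSubgroup.closure B) = a := fun a b hb => by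
    rw [QuotientAddGroup.mk_add, (QuotientAddGroup.eq_zero_iff b).2 (AddSubgroup.subset_closure hb),
      add_zero]
  refine exists_bijOn_of_forall_extend
    ((AddSubgroup.countable_preimage_mk_singleton hB.countable.addSubgroupClosure q).mono
      inter_subset_right)
    (finite_endpointTiles.inter_of_left _) ((isPacking_endpointTiles hB hI₁).inter_preimage hπ q) ?_
  rintro A hA₀ hA hApack x ⟨hxI, hxq⟩ hcov
  have hx : x ∈ Ioo c₀ c₁ := by
    obtain ⟨h₀, h₁⟩ := hI₂ hxI
    refine ⟨h₀.lt_of_ne ?_, h₁.lt_of_ne ?_⟩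
    · rintro rfl
      exact hcov _ (hA₀ ⟨Or.inl ⟨rfl, hxI⟩, hxq⟩) 0 hB.zero_mem (add_zero _)
    · rintro rfl
      refine hcov _ (hA₀ ⟨Or.inr ⟨rfl, hxI⟩, ?_⟩) m hB.mem (sub_add_cancel _ _)
      rwa [mem_preimage, ← hπ _ _ hB.mem, sub_add_cancel]
  obtain ⟨b, hb, hin, hdisj⟩ := hB.exists_tile hA hx hcov
  refine ⟨b, hb, hApack.insert (fun b' hb' => ⟨hI₁ (hin b' hb'), ?_⟩) hdisj⟩
  rwa [mem_preimage, hπ _ _ hb', ← hπ _ _ hb, sub_add_cancel]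

end SteinhausBase

/-- von Neumann's theorem (Steinhaus's problem): every finite interval I (open,
closed, or half-open) is a direct sum A ⊕ B of an uncountable set A and a
countably infinite set B; equivalently I is partitioned into countably
infinitely many pairwise disjoint translates of A. -/
theorem steinhaus_vonNeumann
    (c₀ c₁ : ℝ) (h : c₀ < c₁)
    (I : Set ℝ) (hI₁ : Ioo c₀ c₁ ⊆ I) (hI₂ : I ⊆ Icc c₀ c₁) :
    ∃ A B : Set ℝ, ¬ A.Countable ∧ B.Countable ∧ B.Infinite ∧
      IsDirectSum A B I := by
  obtain ⟨B, m, hB⟩ := exists_steinhausBase (sub_pos.2 h)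
  choose A hA using hB.exists_bijOn_fiber hI₁ hI₂
  have hbij : BijOn (uncurry (· + ·)) ((⋃ q, A q) ×ˢ B) I := by
    rw [iUnion_prod_const]
    exact bijOn_iUnion_of_bijOn_fiber hA
  refine ⟨⋃ q, A q, B, fun hcount => ?_, hB.countable, hB.infinite, isDirectSum_iff_bijOn.2 hbij⟩
  have hcover : Ioo c₀ c₁ ⊆ image2 (· + ·) (⋃ q, A q) B := by
    rw [← image_uncurry_prod]
    exact hI₁.trans hbij.surjOn
  exact (Cardinal.Real.Ioo_countable_iff.1 ((hcount.image2 hB.countable _).mono hcover)).not_gt h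
end

section
/- If a finite interval I is the direct sum A ⊕ B of an uncountable set A and a countably infinite set B of real numbers, then A is not Lebesgue measurable. -/
/-!
The translates `b + A`, `b ∈ B`, partition `I`, so by countable additivity and translation
invariance `vol I = ∑_{b ∈ B} vol A`, which is `0` or `∞` because `B` is countably infinite.
Neither is possible, since `0 < vol I < ∞`.
-/

open Set MeasureTheory

open scoped Pointwise ENNReal

namespace IsDirectSum

section AddCommMagma

variable {M : Type*} [AddCommMagma M] {A B C : Set M}

theorem biUnion_vadd_eq (hABC : IsDirectSum A B C) : ⋃ b ∈ B, b +ᵥ A = C := by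
  refine subset_antisymm (iUnion₂_subset fun b hb => ?_) fun c hc => ?_
  · rintro _ ⟨a, ha, rfl⟩
    simpa [add_comm] using hABC.1 a ha b hb
  · obtain ⟨⟨a, b⟩, ⟨ha, hb, rfl⟩, -⟩ := hABC.2 c hc
    exact mem_biUnion hb ⟨a, ha, add_comm b a⟩

theorem pairwiseDisjoint_vadd (hABC : IsDirectSum A B C) : B.PairwiseDisjoint (· +ᵥ A) := by
  rintro b₁ hb₁ b₂ hb₂ hne
  refine disjoint_left.2 ?_
  rintro _ ⟨a₁, ha₁, rfl⟩ ⟨a₂, ha₂, he⟩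
  obtain ⟨p, -, hp⟩ := hABC.2 (a₁ + b₁) (hABC.1 a₁ ha₁ b₁ hb₁)
  have h₁ : (a₁, b₁) = p := hp _ ⟨ha₁, hb₁, rfl⟩
  have h₂ : (a₂, b₂) = p := hp _ ⟨ha₂, hb₂, by simpa [add_comm] using he⟩
  exact hne (congrArg Prod.snd (h₁.trans h₂.symm))

end AddCommMagma

variable {G : Type*} [AddCommGroup G] {A B C : Set G}
  [MeasurableSpace G] [MeasurableConstVAdd G G] {μ : Measure G} [VAddInvariantMeasure G G μ]

theorem measure_eq_tsum (hABC : IsDirectSum A B C) (hA : NullMeasurableSet A μ)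
    (hB : B.Countable) : μ C = ∑' _ : B, μ A := by
  rw [← hABC.biUnion_vadd_eq, measure_biUnion₀ hB hABC.pairwiseDisjoint_vadd.aedisjoint
    fun b _ => hA.vadd b]
  simp only [measure_vadd]

theorem measure_eq_zero_or_top (hABC : IsDirectSum A B C) (hA : NullMeasurableSet A μ)
    (hBc : B.Countable) (hBi : B.Infinite) : μ C = 0 ∨ μ C = ∞ := by
  have : Infinite B := hBi.to_subtype
  rw [hABC.measure_eq_tsum hA hBc]
  rcases eq_or_ne (μ A) 0 with h0 | h0
  · simp [h0]
  · exact .inr (ENNReal.tsum_const_eq_top_of_ne_zero h0)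

end IsDirectSum

theorem not_measurable_of_directSum_interval_general
    (c₀ c₁ : ℝ) (h : c₀ < c₁)
    (I : Set ℝ) (hI₁ : Ioo c₀ c₁ ⊆ I) (hI₂ : I ⊆ Icc c₀ c₁)
    (A B : Set ℝ) (hBc : B.Countable) (hBi : B.Infinite)
    (hAB : IsDirectSum A B I) :
    ¬ NullMeasurableSet A (volume : Measure ℝ) := by
  intro hA
  have hpos : volume I ≠ 0 :=
    (measure_mono hI₁).trans_lt' (by simpa using h) |>.ne'
  have hfin : volume I ≠ ∞ :=
    ne_top_of_le_ne_top (by simp) (measure_mono hI₂)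
  exact (hAB.measure_eq_zero_or_top hA hBc hBi).elim hpos hfin

/-- If a finite interval is the direct sum A ⊕ B of an uncountable set A and a
countably infinite set B, then A is not Lebesgue measurable. -/
theorem not_measurable_of_directSum_interval
    (c₀ c₁ : ℝ) (h : c₀ < c₁)
    (I : Set ℝ) (hI₁ : Ioo c₀ c₁ ⊆ I) (hI₂ : I ⊆ Icc c₀ c₁)
    (A B : Set ℝ) (hA : ¬ A.Countable) (hBc : B.Countable) (hBi : B.Infinite)
    (hAB : IsDirectSum A B I) :
    ¬ NullMeasurableSet A (volume : Measure ℝ) :=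
  not_measurable_of_directSum_interval_general c₀ c₁ h I hI₁ hI₂ A B hBc hBi hAB
end

section
/- Let B be a set of real numbers linearly independent over ℚ, let x, a ∈ ℝ with x − a ∈ span of B over ℚ, and suppose x ∉ a + B. If for h = 1, 2, 3 there are elements b_{p_h}, b_{q_h}, b_{r_h} ∈ B with x − b_{p_h} + b_{q_h} = a + b_{r_h}, then the elements b_{p_1}, b_{p_2}, b_{p_3} are not all distinct, or two of them coincide with a common element b_{r_1}; in particular b_{p_1}, b_{p_2}, b_{p_3} take at most two distinct values. -/
/-!
Subtracting two of the equations eliminates `x` and `a`: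
`b_{p_1} + b_{r_1} + b_{q_h} = b_{p_h} + b_{r_h} + b_{q_1}`. Over a `ℚ`-independent set a sum of
three elements determines them as a multiset, so `b_{p_h}` is one of `b_{p_1}`, `b_{r_1}`,
`b_{q_h}`; the last is impossible because `x ∉ a + B`. Hence `b_{p_h} ≠ b_{p_1}` forces
`b_{p_h} = b_{r_1}`.
-/

theorem LinearIndependent.eq_of_multiset_map_sum_eq {ι R M : Type*} [Semiring R] [CharZero R]
    [AddCommMonoid M] [Module R M] {v : ι → M} (hv : LinearIndependent R v)
    {s t : Multiset ι} (h : (s.map v).sum = (t.map v).sum) : s = t := by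
  classical
  have sum_eq : ∀ u : Multiset ι, (u.map v).sum =
      Finsupp.linearCombination R v (u.toFinsupp.mapRange Nat.cast Nat.cast_zero) := by
    intro u
    induction u using Multiset.induction_on with
    | empty => simp
    | cons i u ih =>
      rw [← Multiset.singleton_add, Multiset.toFinsupp_add, Finsupp.mapRange_add Nat.cast_add]
      simp [ih]
  rw [sum_eq, sum_eq] at h
  ext i
  simpa using DFunLike.congr_fun (hv.finsuppLinearCombination_injective h) i

theorem LinearIndependent.eq_or_eq_or_eq_of_add_add_eq {R M : Type*} [Semiring R] [CharZero R]
    [AddCommMonoid M] [Module R M] {B : Set M} (hB : LinearIndependent R ((↑) : B → M))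
    {a b c a' b' c' : M} (ha : a ∈ B) (hb : b ∈ B) (hc : c ∈ B)
    (ha' : a' ∈ B) (hb' : b' ∈ B) (hc' : c' ∈ B) (h : a + b + c = a' + b' + c') :
    a' = a ∨ a' = b ∨ a' = c := by
  have hmul := hB.eq_of_multiset_map_sum_eq
    (s := {⟨a, ha⟩, ⟨b, hb⟩, ⟨c, hc⟩}) (t := {⟨a', ha'⟩, ⟨b', hb'⟩, ⟨c', hc'⟩})
    (by simpa [add_assoc] using h)
  have hmem : (⟨a', ha'⟩ : B) ∈ ({⟨a, ha⟩, ⟨b, hb⟩, ⟨c, hc⟩} : Multiset B) := by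
    rw [hmul]; simp
  simpa using hmem

theorem Fin.exists_finset_card_le_two {α : Type*} (f : Fin 3 → α)
    (h : f 0 = f 1 ∨ f 0 = f 2 ∨ f 1 = f 2) : ∃ s : Finset α, s.card ≤ 2 ∧ ∀ i, f i ∈ s := by
  classical
  rcases h with h | h | h
  · exact ⟨{f 1, f 2}, Finset.card_le_two, fun i => by fin_cases i <;> simp [h]⟩
  · exact ⟨{f 0, f 1}, Finset.card_le_two, fun i => by fin_cases i <;> simp [h]⟩
  · exact ⟨{f 0, f 1}, Finset.card_le_two, fun i => by fin_cases i <;> simp [h]⟩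

theorem at_most_two_p_values_general
    (B : Set ℝ) (hli : LinearIndependent ℚ ((↑) : B → ℝ))
    (x a : ℝ)
    (hx : ∀ b ∈ B, x ≠ a + b)
    (bp bq br : Fin 3 → ℝ)
    (hbp : ∀ h, bp h ∈ B) (hbq : ∀ h, bq h ∈ B) (hbr : ∀ h, br h ∈ B)
    (heq : ∀ h, x - bp h + bq h = a + br h) :
    ((bp 0 = bp 1 ∨ bp 0 = bp 2 ∨ bp 1 = bp 2) ∨
      (bp 1 = br 0 ∧ bp 2 = br 0)) ∧
    ∃ s : Finset ℝ, s.card ≤ 2 ∧ ∀ h, bp h ∈ s := by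
  have hpq : ∀ h, bp h ≠ bq h := fun h hpq =>
    hx (br h) (hbr h) (by linarith [heq h])
  have hpr : ∀ h, bp 0 ≠ bp h → bp h = br 0 := by
    intro h hne
    have hsum : bp 0 + br 0 + bq h = bp h + br h + bq 0 := by linarith [heq 0, heq h]
    rcases hli.eq_or_eq_or_eq_of_add_add_eq (hbp 0) (hbr 0) (hbq h) (hbp h) (hbr h) (hbq 0)
      hsum with h0 | hr | hq
    · exact absurd h0.symm hne
    · exact hr
    · exact absurd hq (hpq h)
  have hcases : (bp 0 = bp 1 ∨ bp 0 = bp 2 ∨ bp 1 = bp 2) ∨ (bp 1 = br 0 ∧ bp 2 = br 0) := by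
    by_cases h1 : bp 0 = bp 1
    · exact Or.inl (Or.inl h1)
    by_cases h2 : bp 0 = bp 2
    · exact Or.inl (Or.inr (Or.inl h2))
    exact Or.inr ⟨hpr 1 h1, hpr 2 h2⟩
  refine ⟨hcases, Fin.exists_finset_card_le_two bp ?_⟩
  rcases hcases with h | ⟨h1, h2⟩
  · exact h
  · exact Or.inr (Or.inr (h1.trans h2.symm))

/-- The ℚ-independence argument in the core lemma: if x ∉ a + B and for
h = 1, 2, 3 we have x − b_{p_h} + b_{q_h} = a + b_{r_h} with all these elements
in the ℚ-independent set B, then two of b_{p_1}, b_{p_2}, b_{p_3} are equal, or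
b_{p_2} = b_{p_3} = b_{r_1}; in particular they take at most two distinct values. -/
theorem at_most_two_p_values
    (B : Set ℝ) (hli : LinearIndependent ℚ ((↑) : B → ℝ))
    (x a : ℝ) (hxa : x - a ∈ Submodule.span ℚ B)
    (hx : ∀ b ∈ B, x ≠ a + b)
    (bp bq br : Fin 3 → ℝ)
    (hbp : ∀ h, bp h ∈ B) (hbq : ∀ h, bq h ∈ B) (hbr : ∀ h, br h ∈ B)
    (heq : ∀ h, x - bp h + bq h = a + br h) :
    ((bp 0 = bp 1 ∨ bp 0 = bp 2 ∨ bp 1 = bp 2) ∨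
      (bp 1 = br 0 ∧ bp 2 = br 0)) ∧
    ∃ s : Finset ℝ, s.card ≤ 2 ∧ ∀ h, bp h ∈ s :=
  at_most_two_p_values_general B hli x a hx bp bq br hbp hbq hbr heq
end
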